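/- arXiv:math/0503246 — 9 statements merged into one kernel-verified Lean document; each statement's English description precedes it below -/
import Mathlib

section
/- For every integer k ≥ 1 there is a constant C_k > 0 such that for all reals x ≥ 2 and 2 ≤ y ≤ x, |Φ_k(x,y) − Ψ(x, P_k)| ≤ C_k · x·(log x)^{2k}/y, where P_0 = {p prime : p ≤ y} and P_{j+1} = {p prime : p ≤ x and every prime q dividing p−1 lies in P_j}. -/
/-- `smoothIn x P` is the number of positive integers `n ≤ x` all of whose prime divisors
lie in `P`. -/
noncomputable def smoothIn (x : ℝ) (P : Set ℕ) : ℕ :=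
  {n : ℕ | 0 < n ∧ (n : ℝ) ≤ x ∧ ∀ p : ℕ, p.Prime → p ∣ n → p ∈ P}.ncard

/-- `PhiSmooth k x y` is the number of positive integers `n ≤ x` such that every prime
divisor of the `k`-th iterate `φ_k(n)` of Euler's totient function at `n` is at most `y`. -/
noncomputable def PhiSmooth (k : ℕ) (x y : ℝ) : ℕ :=
  {n : ℕ | 0 < n ∧ (n : ℝ) ≤ x ∧
    ∀ p : ℕ, p.Prime → p ∣ (Nat.totient^[k] n) → (p : ℝ) ≤ y}.ncard

/-- The iterated sets of primes: `P_0 = {p prime : p ≤ y}` and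
`P_{j+1} = {p prime : p ≤ x, every prime q ∣ p − 1 lies in P_j}`. -/
def iterP (x y : ℝ) : ℕ → Set ℕ
  | 0 => {p : ℕ | p.Prime ∧ (p : ℝ) ≤ y}
  | j + 1 => {p : ℕ | p.Prime ∧ (p : ℝ) ≤ x ∧
      ∀ q : ℕ, q.Prime → q ∣ p - 1 → q ∈ iterP x y j}

/-!
A prime `p ∣ n` gives `p - 1 ∣ φ(n)`, so if `φ_k(n)` is `y`-smooth then every prime of `n` lies
in `P_k`: the count `Φ_k(x, y)` is at most `Ψ(x, P_k)`. Conversely, let the primes of `n` lie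
in `P_k` while a prime `w > y` divides `φ_k(n)`. A prime dividing `φ(m)` divides `p - 1` for
some `p ∣ m` unless its square divides `m`; following `w` back this way from inside the tower
`P_k` ends below `y`, so the descent must meet a square `r ^ 2 ∣ φ_j(n)` with `r > y` prime
and `j < k`. Then `r ^ 2 ∣ n`, or a prime factor of `n` leads in fewer than `k` steps
`q ↦ q'`, `q' ∣ q - 1`, to a prime `≡ 1 (mod r ^ 2)` or to two distinct primes `≡ 1 (mod r)`.
In the last case the two chains start at distinct primes `q₀, q₀'` of `n`, or they separate
at a prime `u` with `a * a' ∣ u - 1` for the next primes `a ≠ a'` on them. Either way `n` is a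
multiple of an element of `badDivisors`, whose reciprocal sum is `O((log x) ^ (2k) / r ^ 2)`
because the primes `q ≤ x` with `d ∣ q - 1` have reciprocal sum at most `(1 + log x) / d`.
Summing `1 / r ^ 2` over `r > y` gives the bound.
-/

namespace Nat

theorem Prime.sq_dvd_prod {ι : Type*} [DecidableEq ι] {r : ℕ} (hr : r.Prime) {s : Finset ι}
    {f : ι → ℕ} (h : r ^ 2 ∣ ∏ i ∈ s, f i) :
    (∃ i ∈ s, r ^ 2 ∣ f i) ∨ ∃ i ∈ s, ∃ j ∈ s, i ≠ j ∧ r ∣ f i ∧ r ∣ f j := by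
  induction s using Finset.induction_on with
  | empty => simp [hr.ne_one] at h
  | insert a s has ih =>
    rw [Finset.prod_insert has] at h
    by_cases hrs : r ∣ ∏ i ∈ s, f i
    · obtain ⟨b, hb, hrb⟩ := (Prime.dvd_finsetProd_iff hr.prime _).1 hrs
      by_cases hra : r ∣ f a
      · exact Or.inr ⟨a, Finset.mem_insert_self a s, b, Finset.mem_insert_of_mem hb,
          fun hab => has (hab ▸ hb), hra, hrb⟩
      · have hcop : Coprime (r ^ 2) (f a) := (hr.coprime_iff_not_dvd.2 hra).pow_left 2
        rcases ih (hcop.dvd_of_dvd_mul_left h) with ⟨i, hi, hri⟩ | ⟨i, hi, j, hj, hij, hri, hrj⟩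
        · exact Or.inl ⟨i, Finset.mem_insert_of_mem hi, hri⟩
        · exact Or.inr ⟨i, Finset.mem_insert_of_mem hi, j, Finset.mem_insert_of_mem hj, hij,
            hri, hrj⟩
    · have hcop : Coprime (r ^ 2) (∏ i ∈ s, f i) := (hr.coprime_iff_not_dvd.2 hrs).pow_left 2
      exact Or.inl ⟨a, Finset.mem_insert_self a s, hcop.dvd_of_dvd_mul_right h⟩

theorem sq_dvd_of_dvd_pow_factorization_sub_one {r m p : ℕ} (hr : r.Prime) (hp : p.Prime)
    (h : r ∣ p ^ (m.factorization p - 1)) : r ^ 2 ∣ m := by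
  obtain rfl : r = p := (prime_dvd_prime_iff_eq hr hp).1 (hr.dvd_of_dvd_pow h)
  have hle : 2 ≤ m.factorization r := by
    by_contra! hlt
    rw [show m.factorization r - 1 = 0 by omega, pow_zero] at h
    exact hr.one_lt.ne' (Nat.dvd_one.1 h)
  exact (pow_dvd_pow r hle).trans (ordProj_dvd m r)

theorem sq_dvd_or_pow_dvd_sub_one {r m p : ℕ} (c : ℕ) (hr : r.Prime) (hp : p.Prime)
    (h : r ^ c ∣ p ^ (m.factorization p - 1) * (p - 1)) : r ^ 2 ∣ m ∨ r ^ c ∣ p - 1 := by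
  by_cases hrp : r ∣ p ^ (m.factorization p - 1)
  · exact Or.inl (sq_dvd_of_dvd_pow_factorization_sub_one hr hp hrp)
  · exact Or.inr (((hr.coprime_iff_not_dvd.2 hrp).pow_left c).dvd_of_dvd_mul_left h)

theorem dvd_totient_cases {r m : ℕ} (hr : r.Prime) (hm : m ≠ 0) (h : r ∣ φ m) :
    r ^ 2 ∣ m ∨ ∃ q, q.Prime ∧ q ∣ m ∧ r ∣ q - 1 := by
  rw [totient_eq_prod_factorization hm, Finsupp.prod, support_factorization] at h
  obtain ⟨p, hp, hrp⟩ := (Prime.dvd_finsetProd_iff hr.prime _).1 h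
  have hpp := prime_of_mem_primeFactors hp
  exact (sq_dvd_or_pow_dvd_sub_one 1 hr hpp (by rwa [pow_one])).imp_right fun h =>
    ⟨p, hpp, dvd_of_mem_primeFactors hp, by rwa [pow_one] at h⟩

theorem sq_dvd_totient_cases {r m : ℕ} (hr : r.Prime) (hm : m ≠ 0) (h : r ^ 2 ∣ φ m) :
    r ^ 2 ∣ m ∨ (∃ q, q.Prime ∧ q ∣ m ∧ r ^ 2 ∣ q - 1) ∨
      ∃ q q', q.Prime ∧ q'.Prime ∧ q ≠ q' ∧ q ∣ m ∧ q' ∣ m ∧ r ∣ q - 1 ∧ r ∣ q' - 1 := by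
  rw [totient_eq_prod_factorization hm, Finsupp.prod, support_factorization] at h
  rcases hr.sq_dvd_prod h with ⟨p, hp, hrp⟩ | ⟨p, hp, p', hp', hne, hrp, hrp'⟩
  · have hpp := prime_of_mem_primeFactors hp
    exact (sq_dvd_or_pow_dvd_sub_one 2 hr hpp hrp).imp_right fun h =>
      Or.inl ⟨p, hpp, dvd_of_mem_primeFactors hp, h⟩
  · have hpp := prime_of_mem_primeFactors hp
    have hpp' := prime_of_mem_primeFactors hp'
    rcases sq_dvd_or_pow_dvd_sub_one 1 hr hpp (by rwa [pow_one]) with hsq | hrp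
    · exact Or.inl hsq
    rcases sq_dvd_or_pow_dvd_sub_one 1 hr hpp' (by rwa [pow_one]) with hsq | hrp'
    · exact Or.inl hsq
    rw [pow_one] at hrp hrp'
    exact Or.inr (Or.inr ⟨p, p', hpp, hpp', hne, dvd_of_mem_primeFactors hp,
      dvd_of_mem_primeFactors hp', hrp, hrp'⟩)

theorem lt_of_dvd_sub_one {w q : ℕ} (hq : q.Prime) (h : w ∣ q - 1) : w < q := by
  have := hq.two_le
  have := Nat.le_of_dvd (by omega) h
  omega

theorem iterate_totient_pos {n : ℕ} (hn : 0 < n) (j : ℕ) : 0 < φ^[j] n := by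
  induction j with
  | zero => exact hn
  | succ j ih => rw [Function.iterate_succ_apply']; exact totient_pos.2 ih

theorem iterate_totient_le (n j : ℕ) : φ^[j] n ≤ n := by
  induction j with
  | zero => exact le_rfl
  | succ j ih => rw [Function.iterate_succ_apply']; exact (totient_le _).trans ih

end Nat

open scoped Nat

namespace SmoothTotient

def Descends : ℕ → ℕ → ℕ → Prop
  | 0, a, b => a = b
  | t + 1, a, b => a = b ∨ ∃ c, c.Prime ∧ c ∣ a - 1 ∧ Descends t c b

theorem Descends.refl (t a : ℕ) : Descends t a a := by
  cases t <;> simp [Descends]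

theorem Descends.mono {t t' a b : ℕ} (htt' : t ≤ t') (h : Descends t a b) : Descends t' a b := by
  induction t' generalizing t a with
  | zero => obtain rfl := Nat.le_zero.1 htt'; exact h
  | succ t' ih =>
    match t, h with
    | 0, h => exact Or.inl h
    | _ + 1, Or.inl h => exact Or.inl h
    | _ + 1, Or.inr ⟨c, hc, hca, h⟩ => exact Or.inr ⟨c, hc, hca, ih (by omega) h⟩

theorem Descends.le {t a b : ℕ} (h : Descends t a b) (ha : a.Prime) : b ≤ a := by
  induction t generalizing a with
  | zero => exact (show a = b from h) ▸ le_rfl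
  | succ t ih =>
    rcases h with rfl | ⟨c, hc, hca, h⟩
    · exact le_rfl
    · exact (ih h hc).trans (Nat.lt_of_dvd_sub_one ha hca).le

theorem exists_descends_of_dvd_iterate_totient {i n p : ℕ} (hn : 0 < n) (hp : p.Prime)
    (h : p ∣ φ^[i] n) : ∃ q, q.Prime ∧ q ∣ n ∧ Descends i q p := by
  induction i generalizing n with
  | zero => exact ⟨p, hp, h, rfl⟩
  | succ i ih =>
    rw [Function.iterate_succ_apply] at h
    obtain ⟨q, hq, hqn, hqp⟩ := ih (Nat.totient_pos.2 hn) h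
    rcases Nat.dvd_totient_cases hq hn.ne' hqn with hsq | ⟨q₀, hq₀, hq₀n, hqq₀⟩
    · exact ⟨q, hq, (dvd_pow_self q two_ne_zero).trans hsq, hqp.mono i.le_succ⟩
    · exact ⟨q₀, hq₀, hq₀n, Or.inr ⟨q, hq, hqq₀, hqp⟩⟩

theorem sq_dvd_iterate_totient_cases {j n r : ℕ} (hr : r.Prime) (hn : 0 < n)
    (h : r ^ 2 ∣ φ^[j] n) :
    r ^ 2 ∣ n ∨ ∃ i < j, (∃ q, q.Prime ∧ q ∣ φ^[i] n ∧ r ^ 2 ∣ q - 1) ∨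
      ∃ q q', q.Prime ∧ q'.Prime ∧ q ≠ q' ∧ q ∣ φ^[i] n ∧ q' ∣ φ^[i] n ∧
        r ∣ q - 1 ∧ r ∣ q' - 1 := by
  induction j with
  | zero => exact Or.inl h
  | succ j ih =>
    rw [Function.iterate_succ_apply'] at h
    rcases Nat.sq_dvd_totient_cases hr (Nat.iterate_totient_pos hn j).ne' h with hsq | hcases
    · exact (ih hsq).imp_right fun ⟨i, hij, hi⟩ => ⟨i, by omega, hi⟩
    · exact Or.inr ⟨j, j.lt_succ_self, hcases⟩

theorem mem_iterP_of_forall_dvd_iterate_totient_le {x y : ℝ} {k n : ℕ} (hn : 0 < n)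
    (hnx : (n : ℝ) ≤ x) (h : ∀ p : ℕ, p.Prime → p ∣ φ^[k] n → (p : ℝ) ≤ y) {p : ℕ}
    (hp : p.Prime) (hpn : p ∣ n) : p ∈ iterP x y k := by
  induction k generalizing n p with
  | zero => exact ⟨hp, h p hp hpn⟩
  | succ k ih =>
    refine ⟨hp, le_trans (by exact_mod_cast Nat.le_of_dvd hn hpn) hnx, fun q hq hqp => ?_⟩
    refine ih (Nat.totient_pos.2 hn) (le_trans (by exact_mod_cast Nat.totient_le n) hnx)
      (fun p' hp' hp'd => h p' hp' ?_) hq ?_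
    · rwa [Function.iterate_succ_apply]
    · exact hqp.trans ((Nat.totient_prime hp) ▸ Nat.totient_dvd_of_dvd hpn)

theorem mem_iterP_or_exists_sq_dvd {x y : ℝ} {k n : ℕ} (hn : 0 < n)
    (hP : ∀ p : ℕ, p.Prime → p ∣ n → p ∈ iterP x y k) {j w : ℕ} (hjk : j ≤ k) (hw : w.Prime)
    (hwy : y < w) (hwd : w ∣ φ^[j] n) :
    w ∈ iterP x y (k - j) ∨ ∃ r i : ℕ, r.Prime ∧ y < r ∧ i < j ∧ r ^ 2 ∣ φ^[i] n := by
  induction j generalizing w with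
  | zero => exact Or.inl (hP w hw hwd)
  | succ j ih =>
    rw [Function.iterate_succ_apply'] at hwd
    rcases Nat.dvd_totient_cases hw (Nat.iterate_totient_pos hn j).ne' hwd with
      hsq | ⟨q, hq, hqd, hwq⟩
    · exact Or.inr ⟨w, j, hw, hwy, j.lt_succ_self, hsq⟩
    have hqy : y < q := hwy.trans (by exact_mod_cast Nat.lt_of_dvd_sub_one hq hwq)
    rcases ih (by omega) hq hqy hqd with hqP | ⟨r, i, hri⟩
    · rw [show k - j = k - (j + 1) + 1 by omega] at hqP
      exact Or.inl (hqP.2.2 w hw hwq)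
    · exact Or.inr ⟨r, i, hri.1, hri.2.1, by omega, hri.2.2.2⟩

theorem exists_sq_dvd_iterate_totient {x y : ℝ} {k n : ℕ} (hn : 0 < n)
    (hP : ∀ p : ℕ, p.Prime → p ∣ n → p ∈ iterP x y k) {w : ℕ} (hw : w.Prime) (hwy : y < w)
    (hwd : w ∣ φ^[k] n) : ∃ r i : ℕ, r.Prime ∧ y < r ∧ i < k ∧ r ^ 2 ∣ φ^[i] n := by
  refine (mem_iterP_or_exists_sq_dvd hn hP le_rfl hw hwy hwd).resolve_left fun hw0 => ?_
  rw [Nat.sub_self] at hw0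
  exact hwy.not_ge hw0.2

noncomputable def recipSum (S : Finset ℕ) : ℝ := ∑ q ∈ S, (q : ℝ)⁻¹

theorem recipSum_nonneg (S : Finset ℕ) : 0 ≤ recipSum S :=
  Finset.sum_nonneg fun _ _ => by positivity

theorem recipSum_mono {A B : Finset ℕ} (h : A ⊆ B) : recipSum A ≤ recipSum B :=
  Finset.sum_le_sum_of_subset_of_nonneg h fun _ _ _ => by positivity

theorem recipSum_union_le (A B : Finset ℕ) : recipSum (A ∪ B) ≤ recipSum A + recipSum B := by
  have := Finset.sum_union_inter (s₁ := A) (s₂ := B) (f := fun q : ℕ => (q : ℝ)⁻¹)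
  have := recipSum_nonneg (A ∩ B)
  unfold recipSum at *
  linarith

theorem recipSum_biUnion_le {ι : Type*} (s : Finset ι) (f : ι → Finset ℕ) :
    recipSum (s.biUnion f) ≤ ∑ i ∈ s, recipSum (f i) := by
  rw [← Finset.sup_eq_biUnion]
  exact Finset.apply_sup_le_sum rfl (recipSum_union_le _ _) s

def pairProducts (A : Finset ℕ) : Finset ℕ := A.offDiag.image fun a => a.1 * a.2

theorem recipSum_pairProducts_le (A : Finset ℕ) : recipSum (pairProducts A) ≤ recipSum A ^ 2 :=
  calc recipSum (pairProducts A)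
      ≤ ∑ a ∈ A.offDiag, ((a.1 * a.2 : ℕ) : ℝ)⁻¹ :=
        Finset.sum_image_le_of_nonneg fun _ _ => by positivity
    _ ≤ ∑ a ∈ A ×ˢ A, ((a.1 * a.2 : ℕ) : ℝ)⁻¹ :=
        Finset.sum_le_sum_of_subset_of_nonneg (fun a ha => by
          rw [Finset.mem_offDiag] at ha; exact Finset.mem_product.2 ⟨ha.1, ha.2.1⟩)
          fun _ _ _ => by positivity
    _ = recipSum A ^ 2 := by
        rw [Finset.sum_product, recipSum, sq, Finset.sum_mul_sum]
        push_cast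
        simp only [mul_inv]

def primeStep (N : ℕ) (S : Finset ℕ) : Finset ℕ :=
  (Finset.Iic N).filter fun q => q.Prime ∧ ∃ c ∈ S, c ∣ q - 1

theorem mem_primeStep {N q : ℕ} {S : Finset ℕ} :
    q ∈ primeStep N S ↔ q ≤ N ∧ q.Prime ∧ ∃ c ∈ S, c ∣ q - 1 := by
  simp [primeStep]

theorem primeStep_eq_biUnion (N : ℕ) (S : Finset ℕ) :
    primeStep N S = S.biUnion fun d => primeStep N {d} := by
  ext q
  simp only [mem_primeStep, Finset.mem_biUnion, Finset.mem_singleton, exists_eq_left]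
  grind

theorem recipSum_primeStep_singleton_le (N d : ℕ) :
    recipSum (primeStep N {d}) ≤ recipSum (Finset.Icc 1 N) * (d : ℝ)⁻¹ := by
  rcases Nat.eq_zero_or_pos d with rfl | hd
  · have : primeStep N {0} = ∅ := by
      ext q
      simp only [mem_primeStep, Finset.mem_singleton, exists_eq_left, zero_dvd_iff,
        Finset.notMem_empty, iff_false]
      exact fun ⟨_, hq, hq1⟩ => by have := hq.two_le; omega
    simp [this, recipSum]
  have hsub : primeStep N {d} ⊆ (Finset.Icc 1 N).image fun t => t * d + 1 := by
    intro q hq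
    obtain ⟨hqN, hq, hdq⟩ := by simpa [mem_primeStep] using hq
    obtain ⟨t, ht⟩ := hdq
    have := hq.two_le
    refine Finset.mem_image.2 ⟨t, Finset.mem_Icc.2 ⟨?_, ?_⟩, by rw [mul_comm]; omega⟩
    · exact Nat.pos_of_ne_zero fun ht0 => by simp [ht0] at ht; omega
    · have := Nat.le_mul_of_pos_left t hd
      omega
  calc recipSum (primeStep N {d})
      ≤ ∑ t ∈ Finset.Icc 1 N, ((t * d + 1 : ℕ) : ℝ)⁻¹ :=
        (recipSum_mono hsub).trans (Finset.sum_image_le_of_nonneg fun _ _ => by positivity)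
    _ ≤ ∑ t ∈ Finset.Icc 1 N, (t : ℝ)⁻¹ * (d : ℝ)⁻¹ := by
        refine Finset.sum_le_sum fun t ht => ?_
        have ht1 : (1 : ℝ) ≤ t := by exact_mod_cast (Finset.mem_Icc.1 ht).1
        rw [← mul_inv]
        push_cast
        gcongr
        linarith
    _ = recipSum (Finset.Icc 1 N) * (d : ℝ)⁻¹ := by rw [recipSum, Finset.sum_mul]

theorem recipSum_primeStep_le (N : ℕ) (S : Finset ℕ) :
    recipSum (primeStep N S) ≤ recipSum (Finset.Icc 1 N) * recipSum S := by
  calc recipSum (primeStep N S) ≤ ∑ d ∈ S, recipSum (primeStep N {d}) := by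
        rw [primeStep_eq_biUnion]; exact recipSum_biUnion_le S _
    _ ≤ ∑ d ∈ S, recipSum (Finset.Icc 1 N) * (d : ℝ)⁻¹ :=
        Finset.sum_le_sum fun d _ => recipSum_primeStep_singleton_le N d
    _ = recipSum (Finset.Icc 1 N) * recipSum S := (Finset.mul_sum _ _ _).symm

open Classical in
noncomputable def reach (N : ℕ) (P : Finset ℕ) (t : ℕ) : Finset ℕ :=
  (Finset.Iic N).filter fun q => q.Prime ∧ ∃ p ∈ P, Descends t q p

theorem mem_reach {N t q : ℕ} {P : Finset ℕ} :
    q ∈ reach N P t ↔ q ≤ N ∧ q.Prime ∧ ∃ p ∈ P, Descends t q p := by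
  simp [reach]

theorem mem_reach_succ {N s c q : ℕ} {P : Finset ℕ} (hc : c ∈ reach N P s) (hq : q.Prime)
    (hqN : q ≤ N) (hcq : c ∣ q - 1) : q ∈ reach N P (s + 1) := by
  obtain ⟨-, hc, p, hp, hcp⟩ := mem_reach.1 hc
  exact mem_reach.2 ⟨hqN, hq, p, hp, Or.inr ⟨c, hc, hcq, hcp⟩⟩

theorem reach_succ_subset (N : ℕ) (P : Finset ℕ) (t : ℕ) :
    reach N P (t + 1) ⊆ reach N P t ∪ primeStep N (reach N P t) := by
  intro q hq
  obtain ⟨hqN, hq, p, hp, rfl | ⟨c, hc, hcq, hcp⟩⟩ := mem_reach.1 hq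
  · exact Finset.mem_union_left _ (mem_reach.2 ⟨hqN, hq, q, hp, Descends.refl t q⟩)
  · have hcN : c ≤ N := (Nat.lt_of_dvd_sub_one hq hcq).le.trans hqN
    exact Finset.mem_union_right _
      (mem_primeStep.2 ⟨hqN, hq, c, mem_reach.2 ⟨hcN, hc, p, hp, hcp⟩, hcq⟩)

noncomputable def stepFactor (N : ℕ) : ℝ := 1 + recipSum (Finset.Icc 1 N)

theorem one_le_stepFactor (N : ℕ) : 1 ≤ stepFactor N :=
  le_add_of_nonneg_right (recipSum_nonneg _)

theorem stepFactor_nonneg (N : ℕ) : 0 ≤ stepFactor N :=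
  zero_le_one.trans (one_le_stepFactor N)

theorem stepFactor_le (N : ℕ) : stepFactor N ≤ 2 + Real.log N := by
  have := harmonic_le_one_add_log N
  rw [harmonic_eq_sum_Icc] at this
  push_cast at this
  rw [stepFactor, recipSum]
  linarith

theorem recipSum_reach_le (N : ℕ) (P : Finset ℕ) (t : ℕ) :
    recipSum (reach N P t) ≤ stepFactor N ^ t * recipSum P := by
  induction t with
  | zero =>
    refine (recipSum_mono fun q hq => ?_).trans_eq (one_mul _).symm
    obtain ⟨-, -, p, hp, rfl⟩ := mem_reach.1 hq
    exact hp
  | succ t ih =>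
    calc recipSum (reach N P (t + 1))
        ≤ recipSum (reach N P t) + recipSum (Finset.Icc 1 N) * recipSum (reach N P t) := by
          refine (recipSum_mono (reach_succ_subset N P t)).trans
            ((recipSum_union_le _ _).trans ?_)
          gcongr
          exact recipSum_primeStep_le N _
      _ = stepFactor N * recipSum (reach N P t) := by rw [stepFactor]; ring
      _ ≤ stepFactor N ^ (t + 1) * recipSum P := by
          rw [pow_succ', mul_assoc]
          exact mul_le_mul_of_nonneg_left ih (stepFactor_nonneg N)

theorem mem_reach_primeStep_singleton {N t d q p : ℕ} (hq : q.Prime) (hqN : q ≤ N)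
    (hp : p.Prime) (hdp : d ∣ p - 1) (h : Descends t q p) : q ∈ reach N (primeStep N {d}) t :=
  mem_reach.2 ⟨hqN, hq, p,
    mem_primeStep.2 ⟨(h.le hq).trans hqN, hp, d, Finset.mem_singleton_self d, hdp⟩, h⟩

theorem mem_primeStep_pairProducts {N q a a' : ℕ} {A : Finset ℕ} (hq : q.Prime) (hqN : q ≤ N)
    (ha : a.Prime) (ha' : a'.Prime) (haA : a ∈ A) (ha'A : a' ∈ A) (haa' : a ≠ a')
    (haq : a ∣ q - 1) (ha'q : a' ∣ q - 1) : q ∈ primeStep N (pairProducts A) :=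
  mem_primeStep.2 ⟨hqN, hq, a * a', Finset.mem_image.2
    ⟨(a, a'), Finset.mem_offDiag.2 ⟨haA, ha'A, haa'⟩, rfl⟩,
    Nat.Coprime.mul_dvd_of_dvd_of_dvd ((Nat.coprime_primes ha ha').2 haa') haq ha'q⟩

/-- Where two chains ending at primes `≡ 1 (mod r)` separate at `u`, the two primes
`a ≠ a'` with `a * a' ∣ u - 1` through which they continue are `r` itself (a chain ending at
`u`) or primes at most `b` steps above a prime `≡ 1 (mod r)`. -/
noncomputable def branchHeads (N r b : ℕ) : Finset ℕ := insert r (reach N (primeStep N {r}) b)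

theorem mem_primeStep_branchHeads_of_descends {N r t b q p : ℕ} (hr : r.Prime) (hq : q.Prime)
    (hqN : q ≤ N) (hrq : r ∣ q - 1) (hp : p.Prime) (hrp : r ∣ p - 1) (hqp : q ≠ p)
    (h : Descends (t + 1) q p) (htb : t + 1 ≤ b) :
    q ∈ primeStep N (pairProducts (branchHeads N r (b - 1))) := by
  obtain ⟨c, hc, hcq, hcp⟩ := h.resolve_left hqp
  have hrc : r ≠ c := ((Nat.lt_of_dvd_sub_one hp hrp).trans_le (hcp.le hc)).ne
  have hcN : c ≤ N := (Nat.lt_of_dvd_sub_one hq hcq).le.trans hqN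
  exact mem_primeStep_pairProducts hq hqN hr hc (Finset.mem_insert_self r _)
    (Finset.mem_insert_of_mem (mem_reach_primeStep_singleton hc hcN hp hrp
      (hcp.mono (by omega)))) hrc hrq hcq

/-- The two chains share `s` steps from `q` and then separate. -/
theorem exists_mem_reach_of_descends_pair {N r b t q p p' : ℕ} (hr : r.Prime) (hp : p.Prime)
    (hp' : p'.Prime) (hpp' : p ≠ p') (hrp : r ∣ p - 1) (hrp' : r ∣ p' - 1) (hq : q.Prime)
    (hqN : q ≤ N) (h : Descends t q p) (h' : Descends t q p') (htb : t ≤ b) :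
    ∃ s < b, q ∈ reach N (primeStep N (pairProducts (branchHeads N r (b - 1 - s)))) s := by
  induction t generalizing q b with
  | zero => exact absurd ((show q = p from h).symm.trans h') hpp'
  | succ t ih =>
    have hsplit : q ∈ primeStep N (pairProducts (branchHeads N r (b - 1))) →
        ∃ s < b, q ∈ reach N (primeStep N (pairProducts (branchHeads N r (b - 1 - s)))) s :=
      fun hmem => ⟨0, by omega, mem_reach.2 ⟨hqN, hq, q, hmem, Descends.refl 0 q⟩⟩
    by_cases hqp : q = p
    · subst hqp
      exact hsplit (mem_primeStep_branchHeads_of_descends hr hq hqN hrp hp' hrp' hpp' h' htb)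
    by_cases hqp' : q = p'
    · subst hqp'
      exact hsplit (mem_primeStep_branchHeads_of_descends hr hq hqN hrp' hp hrp
        (Ne.symm hpp') h htb)
    obtain ⟨c, hc, hcq, hcp⟩ := h.resolve_left hqp
    obtain ⟨c', hc', hc'q, hc'p'⟩ := h'.resolve_left hqp'
    have hcN : c ≤ N := (Nat.lt_of_dvd_sub_one hq hcq).le.trans hqN
    by_cases hcc' : c = c'
    · subst hcc'
      obtain ⟨s, hs, hmem⟩ := ih hc hcN hcp hc'p' (Nat.le_sub_one_of_lt htb)
      refine ⟨s + 1, by omega, ?_⟩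
      rw [show b - 1 - (s + 1) = b - 1 - 1 - s by omega]
      exact mem_reach_succ hmem hq hqN hcq
    · have hc'N : c' ≤ N := (Nat.lt_of_dvd_sub_one hq hc'q).le.trans hqN
      exact hsplit (mem_primeStep_pairProducts hq hqN hc hc'
        (Finset.mem_insert_of_mem (mem_reach_primeStep_singleton hc hcN hp hrp
          (hcp.mono (by omega))))
        (Finset.mem_insert_of_mem (mem_reach_primeStep_singleton hc' hc'N hp' hrp'
          (hc'p'.mono (by omega))))
        hcc' hcq hc'q)

noncomputable def splitDivisors (N r b : ℕ) : Finset ℕ :=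
  (Finset.range b).biUnion fun s =>
    reach N (primeStep N (pairProducts (branchHeads N r (b - 1 - s)))) s

noncomputable def badDivisors (N r b : ℕ) : Finset ℕ :=
  {r ^ 2} ∪ reach N (primeStep N {r ^ 2}) b ∪ pairProducts (reach N (primeStep N {r}) b) ∪
    splitDivisors N r b

theorem exists_mem_badDivisors_dvd_of_pair {N r b i n q q' : ℕ} (hr : r.Prime) (hn : 0 < n)
    (hnN : n ≤ N) (hib : i < b) (hq : q.Prime) (hq' : q'.Prime) (hqq' : q ≠ q')
    (hqn : q ∣ φ^[i] n) (hq'n : q' ∣ φ^[i] n) (hrq : r ∣ q - 1) (hrq' : r ∣ q' - 1) :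
    ∃ d ∈ badDivisors N r b, d ∣ n := by
  obtain ⟨q₀, hq₀, hq₀n, hq₀q⟩ := exists_descends_of_dvd_iterate_totient hn hq hqn
  obtain ⟨q₀', hq₀', hq₀'n, hq₀'q'⟩ := exists_descends_of_dvd_iterate_totient hn hq' hq'n
  have hq₀N : q₀ ≤ N := (Nat.le_of_dvd hn hq₀n).trans hnN
  by_cases hroot : q₀ = q₀'
  · subst hroot
    obtain ⟨s, hs, hmem⟩ :=
      exists_mem_reach_of_descends_pair hr hq hq' hqq' hrq hrq' hq₀ hq₀N hq₀q hq₀'q' hib.le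
    refine ⟨q₀, ?_, hq₀n⟩
    simp only [badDivisors, Finset.mem_union]
    exact Or.inr (Finset.mem_biUnion.2 ⟨s, Finset.mem_range.2 hs, hmem⟩)
  · have hq₀'N : q₀' ≤ N := (Nat.le_of_dvd hn hq₀'n).trans hnN
    refine ⟨q₀ * q₀', ?_,
      Nat.Coprime.mul_dvd_of_dvd_of_dvd ((Nat.coprime_primes hq₀ hq₀').2 hroot) hq₀n hq₀'n⟩
    simp only [badDivisors, Finset.mem_union]
    refine Or.inl (Or.inr (Finset.mem_image.2 ⟨(q₀, q₀'), Finset.mem_offDiag.2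
      ⟨?_, ?_, hroot⟩, rfl⟩))
    · exact mem_reach_primeStep_singleton hq₀ hq₀N hq hrq (hq₀q.mono hib.le)
    · exact mem_reach_primeStep_singleton hq₀' hq₀'N hq' hrq' (hq₀'q'.mono hib.le)

theorem exists_mem_badDivisors_dvd {N r b j n : ℕ} (hr : r.Prime) (hn : 0 < n) (hnN : n ≤ N)
    (hjb : j ≤ b) (h : r ^ 2 ∣ φ^[j] n) : ∃ d ∈ badDivisors N r b, d ∣ n := by
  rcases sq_dvd_iterate_totient_cases hr hn h with hsq | ⟨i, hij, ⟨q, hq, hqn, hrq⟩ |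
      ⟨q, q', hq, hq', hqq', hqn, hq'n, hrq, hrq'⟩⟩
  · exact ⟨r ^ 2, by simp [badDivisors], hsq⟩
  · obtain ⟨q₀, hq₀, hq₀n, hq₀q⟩ := exists_descends_of_dvd_iterate_totient hn hq hqn
    have hmem : q₀ ∈ reach N (primeStep N {r ^ 2}) b :=
      mem_reach_primeStep_singleton hq₀ ((Nat.le_of_dvd hn hq₀n).trans hnN) hq hrq
        (hq₀q.mono (by omega))
    exact ⟨q₀, by simp only [badDivisors, Finset.mem_union]; tauto, hq₀n⟩
  · exact exists_mem_badDivisors_dvd_of_pair hr hn hnN (by omega) hq hq' hqq' hqn hq'n hrq hrq'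

theorem recipSum_reach_primeStep_singleton_le (N d t : ℕ) :
    recipSum (reach N (primeStep N {d}) t) ≤ stepFactor N ^ (t + 1) * (d : ℝ)⁻¹ := by
  have hH : recipSum (Finset.Icc 1 N) ≤ stepFactor N := by simp [stepFactor]
  calc recipSum (reach N (primeStep N {d}) t)
      ≤ stepFactor N ^ t * (recipSum (Finset.Icc 1 N) * (d : ℝ)⁻¹) :=
        (recipSum_reach_le N _ t).trans
          (mul_le_mul_of_nonneg_left (recipSum_primeStep_singleton_le N d)
            (pow_nonneg (stepFactor_nonneg N) t))
    _ ≤ stepFactor N ^ (t + 1) * (d : ℝ)⁻¹ := by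
        rw [pow_succ, mul_assoc]
        exact mul_le_mul_of_nonneg_left (mul_le_mul_of_nonneg_right hH (by positivity))
          (pow_nonneg (stepFactor_nonneg N) t)

theorem recipSum_branchHeads_le (N r b : ℕ) :
    recipSum (branchHeads N r b) ≤ 2 * stepFactor N ^ (b + 1) * (r : ℝ)⁻¹ := by
  have hL : 1 ≤ stepFactor N ^ (b + 1) := one_le_pow₀ (one_le_stepFactor N)
  calc recipSum (branchHeads N r b)
      ≤ recipSum {r} + recipSum (reach N (primeStep N {r}) b) := by
        rw [branchHeads, Finset.insert_eq]; exact recipSum_union_le _ _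
    _ ≤ (r : ℝ)⁻¹ + stepFactor N ^ (b + 1) * (r : ℝ)⁻¹ := by
        rw [recipSum, Finset.sum_singleton]
        exact add_le_add_right (recipSum_reach_primeStep_singleton_le N r b) _
    _ ≤ 2 * stepFactor N ^ (b + 1) * (r : ℝ)⁻¹ := by
        have : 0 ≤ (r : ℝ)⁻¹ := by positivity
        nlinarith

theorem recipSum_splitDivisors_le (N r b : ℕ) :
    recipSum (splitDivisors N r b) ≤ 4 * b * stepFactor N ^ (2 * b + 2) * ((r : ℝ) ^ 2)⁻¹ := by
  set L := stepFactor N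
  have hL0 := stepFactor_nonneg N
  have hH : recipSum (Finset.Icc 1 N) ≤ L := by simp [L, stepFactor]
  have hterm : ∀ s ∈ Finset.range b,
      recipSum (reach N (primeStep N (pairProducts (branchHeads N r (b - 1 - s)))) s) ≤
        4 * L ^ (2 * b + 2) * ((r : ℝ) ^ 2)⁻¹ := fun s hs => by
    have hsb := Finset.mem_range.1 hs
    calc _ ≤ L ^ s * (L * recipSum (branchHeads N r (b - 1 - s)) ^ 2) := by
          refine (recipSum_reach_le N _ s).trans (mul_le_mul_of_nonneg_left ?_ (by positivity))
          exact (recipSum_primeStep_le N _).trans (mul_le_mul hH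
            (recipSum_pairProducts_le _) (recipSum_nonneg _) hL0)
      _ ≤ L ^ s * (L * (2 * L ^ (b - s) * (r : ℝ)⁻¹) ^ 2) := by
          have := recipSum_branchHeads_le N r (b - 1 - s)
          rw [show b - 1 - s + 1 = b - s by omega] at this
          gcongr
          exact recipSum_nonneg _
      _ = 4 * L ^ (s + 1 + 2 * (b - s)) * ((r : ℝ) ^ 2)⁻¹ := by ring
      _ ≤ 4 * L ^ (2 * b + 2) * ((r : ℝ) ^ 2)⁻¹ := by
          gcongr 4 * ?_ * _
          exact pow_le_pow_right₀ (one_le_stepFactor N) (by omega)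
  calc recipSum (splitDivisors N r b) ≤ _ := recipSum_biUnion_le _ _
    _ ≤ ∑ s ∈ Finset.range b, 4 * L ^ (2 * b + 2) * ((r : ℝ) ^ 2)⁻¹ := Finset.sum_le_sum hterm
    _ = 4 * b * L ^ (2 * b + 2) * ((r : ℝ) ^ 2)⁻¹ := by
        rw [Finset.sum_const, Finset.card_range, nsmul_eq_mul]; ring

theorem recipSum_badDivisors_le (N r b : ℕ) :
    recipSum (badDivisors N r b) ≤ (4 * b + 3) * stepFactor N ^ (2 * b + 2) * ((r : ℝ) ^ 2)⁻¹ := by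
  have hsplit := recipSum_splitDivisors_le N r b
  set L := stepFactor N
  have hL := one_le_stepFactor N
  have hpow : ∀ e ≤ 2 * b + 2, L ^ e * ((r : ℝ) ^ 2)⁻¹ ≤ L ^ (2 * b + 2) * ((r : ℝ) ^ 2)⁻¹ :=
    fun e he => by gcongr
  have hsq : recipSum {r ^ 2} ≤ L ^ (2 * b + 2) * ((r : ℝ) ^ 2)⁻¹ := by
    simpa [recipSum] using hpow 0 (Nat.zero_le _)
  have hcong : recipSum (reach N (primeStep N {r ^ 2}) b) ≤ L ^ (2 * b + 2) * ((r : ℝ) ^ 2)⁻¹ :=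
    (recipSum_reach_primeStep_singleton_le N (r ^ 2) b).trans
      (by push_cast; exact hpow (b + 1) (by omega))
  have hpair : recipSum (pairProducts (reach N (primeStep N {r}) b)) ≤
      L ^ (2 * b + 2) * ((r : ℝ) ^ 2)⁻¹ := by
    refine (recipSum_pairProducts_le _).trans ?_
    calc _ ≤ (L ^ (b + 1) * (r : ℝ)⁻¹) ^ 2 := by
          gcongr
          · exact recipSum_nonneg _
          · exact recipSum_reach_primeStep_singleton_le N r b
      _ = L ^ (2 * b + 2) * ((r : ℝ) ^ 2)⁻¹ := by ring
  have hunion : recipSum (badDivisors N r b) ≤ recipSum {r ^ 2} +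
      recipSum (reach N (primeStep N {r ^ 2}) b) +
      recipSum (pairProducts (reach N (primeStep N {r}) b)) + recipSum (splitDivisors N r b) := by
    refine (recipSum_union_le _ _).trans ?_
    gcongr
    refine (recipSum_union_le _ _).trans ?_
    gcongr
    exact recipSum_union_le _ _
  linarith

theorem card_filter_exists_dvd_le (N : ℕ) (D : Finset ℕ) :
    (((Finset.Ioc 0 N).filter fun n => ∃ d ∈ D, d ∣ n).card : ℝ) ≤ N * recipSum D := by
  have hsub : ((Finset.Ioc 0 N).filter fun n => ∃ d ∈ D, d ∣ n) ⊆
      D.biUnion fun d => (Finset.Ioc 0 N).filter (d ∣ ·) := by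
    intro n hn
    obtain ⟨hn, d, hd, hdn⟩ := Finset.mem_filter.1 hn
    exact Finset.mem_biUnion.2 ⟨d, hd, Finset.mem_filter.2 ⟨hn, hdn⟩⟩
  calc (((Finset.Ioc 0 N).filter fun n => ∃ d ∈ D, d ∣ n).card : ℝ)
      ≤ ∑ d ∈ D, (((Finset.Ioc 0 N).filter (d ∣ ·)).card : ℝ) := by
        exact_mod_cast (Finset.card_le_card hsub).trans Finset.card_biUnion_le
    _ ≤ ∑ d ∈ D, (N : ℝ) * (d : ℝ)⁻¹ := Finset.sum_le_sum fun d _ => by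
        rw [Nat.Ioc_filter_dvd_card_eq_div, ← div_eq_mul_inv]
        exact Nat.cast_div_le
    _ = N * recipSum D := (Finset.mul_sum _ _ _).symm

theorem sum_inv_sq_le_of_forall_lt {s : Finset ℕ} {y : ℝ} (hy : 0 < y) (hs : ∀ r ∈ s, y < r) :
    ∑ r ∈ s, ((r : ℝ) ^ 2)⁻¹ ≤ 2 / y := by
  have hsub : s ⊆ Finset.Ioo ⌊y⌋₊ (s.sup id + 1) := fun r hr =>
    Finset.mem_Ioo.2 ⟨(Nat.floor_lt hy.le).2 (hs r hr),
      Nat.lt_succ_of_le (Finset.le_sup (f := id) hr)⟩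
  calc ∑ r ∈ s, ((r : ℝ) ^ 2)⁻¹ ≤ ∑ r ∈ Finset.Ioo ⌊y⌋₊ (s.sup id + 1), ((r : ℝ) ^ 2)⁻¹ :=
        Finset.sum_le_sum_of_subset_of_nonneg hsub fun _ _ _ => by positivity
    _ ≤ 2 / (⌊y⌋₊ + 1) := sum_Ioo_inv_sq_le _ _
    _ ≤ 2 / y := div_le_div_of_nonneg_left zero_le_two hy (Nat.lt_floor_add_one y).le

theorem abs_ncard_sub_ncard_le {α : Type*} {s t : Set α} (hst : s ⊆ t) (ht : t.Finite)
    {u : Finset α} (hu : t \ s ⊆ u) : |(s.ncard : ℝ) - t.ncard| ≤ u.card := by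
  have hdiff : (t \ s).ncard ≤ u.card := by
    simpa using Set.ncard_le_ncard hu u.finite_toSet
  have hsum := Set.ncard_sdiff_add_ncard_of_subset hst ht
  have hle : (s.ncard : ℝ) ≤ t.ncard := by exact_mod_cast Set.ncard_le_ncard hst ht
  rw [abs_sub_comm, abs_of_nonneg (sub_nonneg.2 hle)]
  have : ((t \ s).ncard : ℝ) + s.ncard = t.ncard := by exact_mod_cast hsum
  have : ((t \ s).ncard : ℝ) ≤ u.card := by exact_mod_cast hdiff
  linarith

theorem abs_phiSmooth_sub_smoothIn_le {x y : ℝ} {k : ℕ} {D : Finset ℕ}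
    (hD : ∀ n, 0 < n → n ≤ ⌊x⌋₊ → (∀ p : ℕ, p.Prime → p ∣ n → p ∈ iterP x y k) →
      ¬ (∀ p : ℕ, p.Prime → p ∣ φ^[k] n → (p : ℝ) ≤ y) → ∃ d ∈ D, d ∣ n) :
    |(PhiSmooth k x y : ℝ) - smoothIn x (iterP x y k)| ≤ ⌊x⌋₊ * recipSum D := by
  refine le_trans ?_ (card_filter_exists_dvd_le ⌊x⌋₊ D)
  unfold PhiSmooth smoothIn
  refine abs_ncard_sub_ncard_le ?_ ?_ ?_
  · rintro n ⟨hn, hnx, h⟩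
    exact ⟨hn, hnx, fun p hp hpn => mem_iterP_of_forall_dvd_iterate_totient_le hn hnx h hp hpn⟩
  · exact (Finset.Ioc 0 ⌊x⌋₊).finite_toSet.subset fun n hn =>
      Finset.mem_Ioc.2 ⟨hn.1, Nat.le_floor hn.2.1⟩
  · rintro n ⟨⟨hn, hnx, hP⟩, hΦ⟩
    exact Finset.mem_filter.2 ⟨Finset.mem_Ioc.2 ⟨hn, Nat.le_floor hnx⟩,
      hD n hn (Nat.le_floor hnx) hP fun h => hΦ ⟨hn, hnx, h⟩⟩

noncomputable def badDivisorsAbove (N b : ℕ) (y : ℝ) : Finset ℕ :=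
  ((Finset.Iic N).filter fun r : ℕ => r.Prime ∧ y < r).biUnion fun r => badDivisors N r b

theorem exists_mem_badDivisorsAbove_dvd {x y : ℝ} {b n N : ℕ} (hn : 0 < n) (hnN : n ≤ N)
    (hP : ∀ p : ℕ, p.Prime → p ∣ n → p ∈ iterP x y (b + 1))
    (hΦ : ¬ ∀ p : ℕ, p.Prime → p ∣ φ^[b + 1] n → (p : ℝ) ≤ y) :
    ∃ d ∈ badDivisorsAbove N b y, d ∣ n := by
  push Not at hΦ
  obtain ⟨w, hw, hwn, hwy⟩ := hΦ
  obtain ⟨r, i, hr, hry, hib, hrn⟩ := exists_sq_dvd_iterate_totient hn hP hw hwy hwn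
  have hrN : r ≤ N := (Nat.le_self_pow two_ne_zero r).trans
    ((Nat.le_of_dvd (Nat.iterate_totient_pos hn i) hrn).trans
      ((Nat.iterate_totient_le n i).trans hnN))
  obtain ⟨d, hd, hdn⟩ := exists_mem_badDivisors_dvd hr hn hnN (Nat.le_of_lt_succ hib) hrn
  exact ⟨d, Finset.mem_biUnion.2 ⟨r, Finset.mem_filter.2 ⟨Finset.mem_Iic.2 hrN, hr, hry⟩, hd⟩,
    hdn⟩

theorem recipSum_badDivisorsAbove_le (N b : ℕ) {y : ℝ} (hy : 0 < y) :
    recipSum (badDivisorsAbove N b y) ≤ (4 * b + 3) * stepFactor N ^ (2 * b + 2) * (2 / y) :=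
  calc recipSum (badDivisorsAbove N b y)
      ≤ ∑ r ∈ (Finset.Iic N).filter (fun r : ℕ => r.Prime ∧ y < r),
          (4 * b + 3) * stepFactor N ^ (2 * b + 2) * ((r : ℝ) ^ 2)⁻¹ :=
        (recipSum_biUnion_le _ _).trans
          (Finset.sum_le_sum fun r _ => recipSum_badDivisors_le N r b)
    _ ≤ (4 * b + 3) * stepFactor N ^ (2 * b + 2) * (2 / y) := by
        rw [← Finset.mul_sum]
        exact mul_le_mul_of_nonneg_left
          (sum_inv_sq_le_of_forall_lt hy fun r hr => (Finset.mem_filter.1 hr).2.2)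
          (mul_nonneg (by positivity) (pow_nonneg (stepFactor_nonneg N) _))

theorem stepFactor_floor_le {x : ℝ} (hx : 2 ≤ x) : stepFactor ⌊x⌋₊ ≤ 4 * Real.log x := by
  have hN : (0 : ℝ) < ⌊x⌋₊ := by exact_mod_cast Nat.floor_pos.2 (by linarith)
  have hlogN := Real.log_le_log hN (Nat.floor_le (by linarith))
  have hlog2 := (Real.log_le_log (by norm_num) hx).trans' Real.log_two_gt_d9.le
  linarith [stepFactor_le ⌊x⌋₊]

end SmoothTotient

open SmoothTotient

theorem statement4 (k : ℕ) (hk : 1 ≤ k) :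
    ∃ C : ℝ, 0 < C ∧ ∀ x y : ℝ, 2 ≤ x → 2 ≤ y → y ≤ x →
      |(PhiSmooth k x y : ℝ) - (smoothIn x (iterP x y k) : ℝ)| ≤
        C * x * (Real.log x) ^ (2 * k) / y := by
  obtain ⟨b, rfl⟩ : ∃ b, k = b + 1 := ⟨k - 1, by omega⟩
  refine ⟨2 * (4 * b + 3) * 4 ^ (2 * (b + 1)), by positivity, fun x y hx hy _ => ?_⟩
  have hL := pow_le_pow_left₀ (stepFactor_nonneg _) (stepFactor_floor_le hx) (2 * b + 2)
  calc |(PhiSmooth (b + 1) x y : ℝ) - (smoothIn x (iterP x y (b + 1)) : ℝ)|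
      ≤ ⌊x⌋₊ * recipSum (badDivisorsAbove ⌊x⌋₊ b y) :=
        abs_phiSmooth_sub_smoothIn_le fun _ hn hnN hP hΦ =>
          exists_mem_badDivisorsAbove_dvd hn hnN hP hΦ
    _ ≤ x * ((4 * b + 3) * (4 * Real.log x) ^ (2 * b + 2) * (2 / y)) :=
        mul_le_mul (Nat.floor_le (by linarith))
          ((recipSum_badDivisorsAbove_le _ b (by linarith)).trans (by gcongr))
          (recipSum_nonneg _) (by linarith)
    _ = 2 * (4 * b + 3) * 4 ^ (2 * (b + 1)) * x * Real.log x ^ (2 * (b + 1)) / y := by ring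
end

section
/- For each real x ≥ 2 let P(x) be a set of primes ≤ x. Then the following are equivalent: (a) there exists a constant C > 0 such that for all x ≥ 2, ∑_{p ≤ x, p prime, p ∉ P(x)} 1/p ≤ C; (b) there exist constants c₁, c₂ > 0 such that for all x ≥ 2, c₁/log(x) ≤ ∏_{p ∈ P(x)} (1 − 1/p) ≤ c₂/log(x). -/
/-!
For `k ≥ 2` one has `exp (-1 / (k - 1)) ≤ 1 - 1 / k ≤ exp (-1 / k)`, and the gaps
`1 / (k - 1) - 1 / k ≤ 2 / k ^ 2` sum to at most `2 ζ(2) = π ^ 2 / 3`. Hence a product of factors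
`1 - 1 / p` is `exp (-∑ 1 / p)` up to bounded factors. Splitting the product over all primes
`p ≤ x` into the primes in `P x` and the others, and using Mertens' estimate
`∏_{p ≤ x} (1 - 1 / p) ≍ 1 / log x`, the product over `P x` is `≍ 1 / log x` exactly when the
reciprocal sum over the other primes stays bounded.

Mertens' estimate: the upper bound comes from the Euler product
`∏_{p ≤ n} (1 - 1 / p)⁻¹ ≥ ∑_{m ≤ n} 1 / m ≥ log (n + 1)`; the lower bound from
`∑_{p ≤ n} 1 / p ≤ log log n + O(1)`, obtained by partial summation from Chebyshev's
`∑_{p ≤ n} log p / p ≤ log n + log 4`, itself a consequence of Legendre's formula for `n!` and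
`θ(n) ≤ n log 4`.
-/

open scoped Classical
open Finset Real
open scoped Nat

lemma exp_neg_inv_sub_one_le_one_sub_inv {u : ℝ} (hu : 1 < u) :
    exp (-(u - 1)⁻¹) ≤ 1 - u⁻¹ := by
  have hv : 0 < u - 1 := sub_pos.2 hu
  calc exp (-(u - 1)⁻¹) = (exp (u - 1)⁻¹)⁻¹ := exp_neg _
    _ ≤ ((u - 1)⁻¹ + 1)⁻¹ := inv_anti₀ (by positivity) (add_one_le_exp _)
    _ = 1 - u⁻¹ := by field_simp; ring

lemma inv_sub_one_sub_inv_le_two_mul_one_div_sq {u : ℝ} (hu : 2 ≤ u) :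
    (u - 1)⁻¹ - u⁻¹ ≤ 2 * (1 / u ^ 2) := by
  have hv : 0 < u - 1 := by linarith
  rw [inv_sub_inv hv.ne' (by positivity), sub_sub_cancel, div_le_iff₀ (by positivity)]
  field_simp
  nlinarith

lemma sum_inv_sub_one_le_sum_inv_add (s : Finset ℕ) (hs : ∀ k ∈ s, 2 ≤ k) :
    ∑ k ∈ s, ((k : ℝ) - 1)⁻¹ ≤ ∑ k ∈ s, (k : ℝ)⁻¹ + π ^ 2 / 3 := by
  have key : ∑ k ∈ s, (((k : ℝ) - 1)⁻¹ - (k : ℝ)⁻¹) ≤ π ^ 2 / 3 := calc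
    _ ≤ ∑ k ∈ s, 2 * (1 / (k : ℝ) ^ 2) :=
      sum_le_sum fun k hk => inv_sub_one_sub_inv_le_two_mul_one_div_sq (by exact_mod_cast hs k hk)
    _ = 2 * ∑ k ∈ s, 1 / (k : ℝ) ^ 2 := (mul_sum _ _ _).symm
    _ ≤ 2 * (π ^ 2 / 6) := by
      gcongr; exact sum_le_hasSum s (fun _ _ => by positivity) hasSum_zeta_two
    _ = π ^ 2 / 3 := by ring
  rw [sum_sub_distrib] at key
  linarith

lemma prod_one_sub_inv_le_exp_neg_sum_inv (s : Finset ℕ) :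
    ∏ k ∈ s, (1 - (k : ℝ)⁻¹) ≤ exp (-∑ k ∈ s, (k : ℝ)⁻¹) := by
  rw [← sum_neg_distrib, exp_sum]
  exact prod_le_prod (fun k _ => sub_nonneg.2 (Nat.cast_inv_le_one k))
    fun k _ => one_sub_le_exp_neg _

lemma exp_neg_sum_inv_add_le_prod_one_sub_inv (s : Finset ℕ) (hs : ∀ k ∈ s, 2 ≤ k) :
    exp (-(∑ k ∈ s, (k : ℝ)⁻¹ + π ^ 2 / 3)) ≤ ∏ k ∈ s, (1 - (k : ℝ)⁻¹) :=
  calc exp (-(∑ k ∈ s, (k : ℝ)⁻¹ + π ^ 2 / 3))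
      ≤ exp (-∑ k ∈ s, ((k : ℝ) - 1)⁻¹) :=
        exp_le_exp.2 (neg_le_neg (sum_inv_sub_one_le_sum_inv_add s hs))
    _ = ∏ k ∈ s, exp (-((k : ℝ) - 1)⁻¹) := by rw [← sum_neg_distrib, exp_sum]
    _ ≤ ∏ k ∈ s, (1 - (k : ℝ)⁻¹) :=
        prod_le_prod (fun _ _ => (exp_pos _).le) fun k hk =>
          exp_neg_inv_sub_one_le_one_sub_inv (by exact_mod_cast hs k hk)

lemma prod_one_sub_inv_pos {s : Finset ℕ} (hs : ∀ k ∈ s, 2 ≤ k) :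
    0 < ∏ k ∈ s, (1 - (k : ℝ)⁻¹) :=
  (exp_pos _).trans_le (exp_neg_sum_inv_add_le_prod_one_sub_inv s hs)

section ProdFilter

variable (s : Finset ℕ) (q : ℕ → Prop) [DecidablePred q]

lemma prod_one_sub_inv_le_prod_filter :
    ∏ k ∈ s, (1 - (k : ℝ)⁻¹) ≤ ∏ k ∈ s with q k, (1 - (k : ℝ)⁻¹) := by
  rw [← prod_filter_mul_prod_filter_not s q]
  refine mul_le_of_le_one_right (prod_nonneg fun k _ => sub_nonneg.2 (Nat.cast_inv_le_one k)) ?_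
  exact prod_le_one (fun k _ => sub_nonneg.2 (Nat.cast_inv_le_one k))
    fun k _ => sub_le_self _ (by positivity)

variable {s}

lemma prod_filter_le_exp_mul_prod_one_sub_inv (hs : ∀ k ∈ s, 2 ≤ k) :
    ∏ k ∈ s with q k, (1 - (k : ℝ)⁻¹) ≤
      exp (∑ k ∈ s with ¬q k, (k : ℝ)⁻¹ + π ^ 2 / 3) * ∏ k ∈ s, (1 - (k : ℝ)⁻¹) := by
  set E := ∑ k ∈ s with ¬q k, (k : ℝ)⁻¹ + π ^ 2 / 3
  rw [← prod_filter_mul_prod_filter_not s q]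
  set A := ∏ k ∈ s with q k, (1 - (k : ℝ)⁻¹)
  have hA : 0 ≤ A := (prod_one_sub_inv_pos fun k hk => hs k (mem_filter.1 hk).1).le
  have hB : exp (-E) ≤ ∏ k ∈ s with ¬q k, (1 - (k : ℝ)⁻¹) :=
    exp_neg_sum_inv_add_le_prod_one_sub_inv _ fun k hk => hs k (mem_filter.1 hk).1
  calc A = exp E * (A * exp (-E)) := by rw [exp_neg]; field_simp
    _ ≤ exp E * (A * ∏ k ∈ s with ¬q k, (1 - (k : ℝ)⁻¹)) := by gcongr

lemma exp_sum_filter_not_inv_le_div (hs : ∀ k ∈ s, 2 ≤ k) :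
    exp (∑ k ∈ s with ¬q k, (k : ℝ)⁻¹) ≤
      (∏ k ∈ s with q k, (1 - (k : ℝ)⁻¹)) / ∏ k ∈ s, (1 - (k : ℝ)⁻¹) := by
  set S := ∑ k ∈ s with ¬q k, (k : ℝ)⁻¹
  rw [le_div_iff₀ (prod_one_sub_inv_pos hs), ← prod_filter_mul_prod_filter_not s q]
  set A := ∏ k ∈ s with q k, (1 - (k : ℝ)⁻¹)
  have hA : 0 ≤ A := (prod_one_sub_inv_pos fun k hk => hs k (mem_filter.1 hk).1).le
  calc exp S * (A * ∏ k ∈ s with ¬q k, (1 - (k : ℝ)⁻¹)) ≤ exp S * (A * exp (-S)) := by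
        gcongr; exact prod_one_sub_inv_le_exp_neg_sum_inv _
    _ = A := by rw [exp_neg]; field_simp

end ProdFilter

lemma div_le_factorization_factorial {p : ℕ} (hp : p.Prime) (n : ℕ) :
    n / p ≤ (n !).factorization p := by
  rcases lt_or_ge n p with hnp | hpn
  · simp [Nat.div_eq_of_lt hnp]
  have hlog : 0 < Nat.log p n := Nat.log_pos hp.one_lt hpn
  rw [Nat.factorization_factorial hp (Nat.lt_add_one (Nat.log p n))]
  calc n / p = n / p ^ 1 := by rw [pow_one]
    _ ≤ _ := single_le_sum (f := fun i => n / p ^ i) (fun _ _ => Nat.zero_le _)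
      (mem_Ico.2 ⟨le_rfl, by omega⟩)

lemma sum_primesLE_div_mul_log_le_log_factorial (n : ℕ) :
    ∑ p ∈ Nat.primesLE n, ((n / p : ℕ) : ℝ) * log p ≤ log (n ! : ℕ) := by
  rw [log_nat_eq_sum_factorization, Finsupp.sum, Nat.support_factorization]
  calc ∑ p ∈ Nat.primesLE n, ((n / p : ℕ) : ℝ) * log p
      ≤ ∑ p ∈ Nat.primesLE n, (((n !).factorization p : ℕ) : ℝ) * log p := by
        gcongr with p hp
        exact div_le_factorization_factorial (Nat.prime_of_mem_primesLE hp) n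
    _ ≤ _ := by
        refine sum_le_sum_of_subset_of_nonneg (fun p hp => ?_) fun p _ _ => by positivity
        obtain ⟨hpn, hp⟩ := Nat.mem_primesLE.1 hp
        exact Nat.mem_primeFactors.2 ⟨hp, hp.dvd_factorial.2 hpn, Nat.factorial_ne_zero n⟩

lemma sum_primesLE_log_div_le (n : ℕ) :
    ∑ p ∈ Nat.primesLE n, log p / p ≤ log n + log 4 := by
  rcases n.eq_zero_or_pos with rfl | hn
  · simp [Nat.primesLE_zero, log_nonneg]
  have hn' : (0 : ℝ) < n := by exact_mod_cast hn
  have hfloor : ∀ p ∈ Nat.primesLE n,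
      (n : ℝ) * (log p / p) ≤ ((n / p : ℕ) : ℝ) * log p + log p := by
    intro p hp
    have hp0 : (0 : ℝ) < p := by exact_mod_cast (Nat.prime_of_mem_primesLE hp).pos
    calc (n : ℝ) * (log p / p) = (n / p : ℝ) * log p := by ring
      _ ≤ ((n / p : ℕ) + 1 : ℝ) * log p := by
        gcongr
        rw [← Nat.floor_div_eq_div (K := ℝ)]
        exact (Nat.lt_floor_add_one _).le
      _ = _ := by ring
  have htheta : ∑ p ∈ Nat.primesLE n, log p ≤ n * log 4 := by
    rw [← Chebyshev.theta_eq_sum_primesLE_log, mul_comm]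
    exact Chebyshev.theta_le_log4_mul_x (Nat.cast_nonneg n)
  have hfact : log (n ! : ℕ) ≤ n * log n := by
    rw [← log_pow, ← Nat.cast_pow]
    gcongr
    exact_mod_cast n.factorial_le_pow
  refine le_of_mul_le_mul_left ?_ hn'
  calc (n : ℝ) * ∑ p ∈ Nat.primesLE n, log p / p
      ≤ ∑ p ∈ Nat.primesLE n, (((n / p : ℕ) : ℝ) * log p + log p) := by
        rw [mul_sum]; exact sum_le_sum hfloor
    _ ≤ n * log n + n * log 4 := by
        rw [sum_add_distrib]
        linarith [sum_primesLE_div_mul_log_le_log_factorial n]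
    _ = n * (log n + log 4) := by ring

lemma exists_le_log_log_add_of_sub_eq_div_log {S T : ℕ → ℝ} {L : ℝ}
    (hT : ∀ n, 2 ≤ n → T n ≤ log n + L)
    (hST : ∀ n, 2 ≤ n → S (n + 1) - S n = (T (n + 1) - T n) / log (n + 1 : ℕ)) :
    ∃ C, ∀ n, 2 ≤ n → S n ≤ log (log n) + C := by
  -- `S - Φ` is nonincreasing: the discrete form of partial summation of `dT / log`.
  set Φ : ℕ → ℝ := fun n => (T n - L) / log n + log (log n)
  have hlog : ∀ n : ℕ, 2 ≤ n → 0 < log n := fun n hn =>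
    log_pos (by exact_mod_cast hn.trans_lt' one_lt_two)
  have hstep : ∀ n, 2 ≤ n → S (n + 1) - S n ≤ Φ (n + 1) - Φ n := by
    intro n hn
    simp only [Φ, hST n hn]
    set a := log n
    set b := log (n + 1 : ℕ)
    have ha : 0 < a := hlog n hn
    have hb : 0 < b := hlog (n + 1) (by omega)
    have hab : a ≤ b := log_le_log (by positivity) (by push_cast; linarith)
    have hT' : a / b - 1 ≤ (T n - L) / b - (T n - L) / a := by
      have : a * (b⁻¹ - a⁻¹) ≤ (T n - L) * (b⁻¹ - a⁻¹) :=
        mul_le_mul_of_nonpos_right (by linarith [hT n hn]) (sub_nonpos.2 (inv_anti₀ ha hab))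
      rw [mul_sub, mul_sub, mul_inv_cancel₀ ha.ne'] at this
      simpa only [div_eq_mul_inv] using this
    have hlog' : 1 - a / b ≤ log b - log a := by
      have := log_le_sub_one_of_pos (div_pos ha hb)
      rw [log_div ha.ne' hb.ne'] at this
      linarith
    have : (T (n + 1) - T n) / b = (T (n + 1) - L) / b - (T n - L) / b := by ring
    linarith
  have hmono : ∀ n, 2 ≤ n → S n - Φ n ≤ S 2 - Φ 2 := by
    intro n hn
    induction n, hn using Nat.le_induction with
    | base => exact le_rfl
    | succ n hn ih => linarith [hstep n hn]
  refine ⟨1 + S 2 - Φ 2, fun n hn => ?_⟩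
  have hΦ : Φ n ≤ 1 + log (log n) := by
    have : (T n - L) / log n ≤ 1 := (div_le_one (hlog n hn)).2 (by linarith [hT n hn])
    simp only [Φ]; linarith
  linarith [hmono n hn]

lemma exists_sum_primesLE_inv_le_log_log_add :
    ∃ C, ∀ n, 2 ≤ n → ∑ p ∈ Nat.primesLE n, (p : ℝ)⁻¹ ≤ log (log n) + C := by
  refine exists_le_log_log_add_of_sub_eq_div_log (L := log 4)
    (fun n _ => sum_primesLE_log_div_le n) fun n hn => ?_
  have hlog : log (n + 1 : ℕ) ≠ 0 := (log_pos (by exact_mod_cast (by omega : 1 < n + 1))).ne'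
  rw [Nat.primesLE_succ]
  split_ifs
  · rw [sum_insert (Nat.notMem_primesLE n), sum_insert (Nat.notMem_primesLE n)]
    field_simp
    ring
  · simp

lemma log_add_one_le_prod_primesLE_inv_one_sub_inv (n : ℕ) :
    log (n + 1) ≤ ∏ p ∈ Nat.primesLE n, (1 - (p : ℝ)⁻¹)⁻¹ := by
  let f : ℕ →* ℝ :=
    { toFun n := (n : ℝ)⁻¹
      map_one' := by simp
      map_mul' m n := by simp [mul_comm] }
  have hf : ∀ {p : ℕ}, p.Prime → ‖f p‖ < 1 := fun hp => by
    simpa [f, abs_inv] using inv_lt_one_of_one_lt₀ (by exact_mod_cast hp.one_lt)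
  obtain ⟨-, hsum⟩ :=
    EulerProduct.summable_and_hasSum_smoothNumbers_prod_primesBelow_geometric hf (n + 1)
  calc log (n + 1) ≤ harmonic n := mod_cast log_add_one_le_harmonic n
    _ = ∑ m ∈ (Icc 1 n).subtype (· ∈ (n + 1).smoothNumbers), f m := by
        rw [sum_subtype_eq_sum_filter, filter_true_of_mem fun m hm =>
          Nat.mem_smoothNumbers_of_lt (by grind) (by grind),
          harmonic_eq_sum_Icc]
        push_cast
        rfl
    _ ≤ _ := sum_le_hasSum _ (fun _ _ => by simp [f]) hsum

lemma prod_primesLE_one_sub_inv_le_inv_log {x : ℝ} (hx : 1 < x) :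
    ∏ p ∈ Nat.primesLE ⌊x⌋₊, (1 - (p : ℝ)⁻¹) ≤ (log x)⁻¹ := by
  have hpos := prod_one_sub_inv_pos fun _ => Nat.two_le_of_mem_primesLE (n := ⌊x⌋₊)
  rw [le_inv_comm₀ hpos (log_pos hx), ← prod_inv_distrib]
  calc log x ≤ log (⌊x⌋₊ + 1) := log_le_log (by linarith) (Nat.lt_floor_add_one x).le
    _ ≤ _ := log_add_one_le_prod_primesLE_inv_one_sub_inv _

lemma exists_div_log_le_prod_primesLE_one_sub_inv :
    ∃ a, 0 < a ∧ ∀ x : ℝ, 2 ≤ x → a / log x ≤ ∏ p ∈ Nat.primesLE ⌊x⌋₊, (1 - (p : ℝ)⁻¹) := by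
  obtain ⟨C, hC⟩ := exists_sum_primesLE_inv_le_log_log_add
  refine ⟨exp (-(C + π ^ 2 / 3)), exp_pos _, fun x hx => ?_⟩
  have hn : 2 ≤ ⌊x⌋₊ := Nat.le_floor (by exact_mod_cast hx)
  have hlogx : 0 < log x := log_pos (by linarith)
  have hsum : ∑ p ∈ Nat.primesLE ⌊x⌋₊, (p : ℝ)⁻¹ ≤ log (log x) + C := by
    refine (hC _ hn).trans (add_le_add_left ?_ _)
    have : (2 : ℝ) ≤ ⌊x⌋₊ := by exact_mod_cast hn
    gcongr
    · exact log_pos (by linarith)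
    · exact Nat.floor_le (by linarith)
  calc exp (-(C + π ^ 2 / 3)) / log x = exp (-(log (log x) + C + π ^ 2 / 3)) := by
        rw [show -(log (log x) + C + π ^ 2 / 3) = -(C + π ^ 2 / 3) - log (log x) by ring,
          exp_sub, exp_log hlogx]
    _ ≤ exp (-(∑ p ∈ Nat.primesLE ⌊x⌋₊, (p : ℝ)⁻¹ + π ^ 2 / 3)) := by gcongr
    _ ≤ _ := exp_neg_sum_inv_add_le_prod_one_sub_inv _ fun _ => Nat.two_le_of_mem_primesLE

section PrimeSubset

variable (P : ℝ → Set ℕ)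

lemma exists_div_log_le_prod_primesLE_filter_le_div_log {C : ℝ}
    (hC : ∀ x : ℝ, 2 ≤ x → ∑ p ∈ Nat.primesLE ⌊x⌋₊ with p ∉ P x, (p : ℝ)⁻¹ ≤ C) :
    ∃ c₁ c₂ : ℝ, 0 < c₁ ∧ 0 < c₂ ∧ ∀ x : ℝ, 2 ≤ x →
      c₁ / log x ≤ ∏ p ∈ Nat.primesLE ⌊x⌋₊ with p ∈ P x, (1 - (p : ℝ)⁻¹) ∧
      ∏ p ∈ Nat.primesLE ⌊x⌋₊ with p ∈ P x, (1 - (p : ℝ)⁻¹) ≤ c₂ / log x := by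
  obtain ⟨a, ha, hlow⟩ := exists_div_log_le_prod_primesLE_one_sub_inv
  refine ⟨a, exp (C + π ^ 2 / 3), ha, exp_pos _, fun x hx =>
    ⟨(hlow x hx).trans (prod_one_sub_inv_le_prod_filter _ _), ?_⟩⟩
  have htwo : ∀ p ∈ Nat.primesLE ⌊x⌋₊, 2 ≤ p := fun _ => Nat.two_le_of_mem_primesLE
  calc _ ≤ exp (∑ p ∈ Nat.primesLE ⌊x⌋₊ with p ∉ P x, (p : ℝ)⁻¹ + π ^ 2 / 3) *
        ∏ p ∈ Nat.primesLE ⌊x⌋₊, (1 - (p : ℝ)⁻¹) :=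
        prod_filter_le_exp_mul_prod_one_sub_inv _ htwo
    _ ≤ exp (C + π ^ 2 / 3) * (log x)⁻¹ := by
        gcongr
        · exact (prod_one_sub_inv_pos htwo).le
        · exact hC x hx
        · exact prod_primesLE_one_sub_inv_le_inv_log (by linarith)

lemma exists_sum_primesLE_filter_not_le_of_prod_le_div_log {c : ℝ} (hc : 0 < c)
    (hprod : ∀ x : ℝ, 2 ≤ x →
      ∏ p ∈ Nat.primesLE ⌊x⌋₊ with p ∈ P x, (1 - (p : ℝ)⁻¹) ≤ c / log x) :
    ∃ C : ℝ, 0 < C ∧ ∀ x : ℝ, 2 ≤ x → ∑ p ∈ Nat.primesLE ⌊x⌋₊ with p ∉ P x, (p : ℝ)⁻¹ ≤ C := by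
  obtain ⟨a, ha, hlow⟩ := exists_div_log_le_prod_primesLE_one_sub_inv
  refine ⟨c / a, by positivity, fun x hx => ?_⟩
  have hlogx : 0 < log x := log_pos (by linarith)
  calc _ ≤ exp (∑ p ∈ Nat.primesLE ⌊x⌋₊ with p ∉ P x, (p : ℝ)⁻¹) :=
        (le_add_of_nonneg_right zero_le_one).trans (add_one_le_exp _)
    _ ≤ _ := exp_sum_filter_not_inv_le_div _ fun _ => Nat.two_le_of_mem_primesLE
    _ ≤ (c / log x) / (a / log x) :=
        div_le_div₀ (by positivity) (hprod x hx) (by positivity) (hlow x hx)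
    _ = c / a := by field_simp

end PrimeSubset

theorem statement9 (P : ℝ → Set ℕ)
    (hP : ∀ x : ℝ, 2 ≤ x → ∀ p ∈ P x, Nat.Prime p ∧ (p : ℝ) ≤ x) :
    (∃ C : ℝ, 0 < C ∧ ∀ x : ℝ, 2 ≤ x →
        ∑ p ∈ (Finset.range (⌊x⌋₊ + 1)).filter (fun p => Nat.Prime p ∧ p ∉ P x),
          (1 : ℝ) / p ≤ C) ↔
    (∃ c₁ c₂ : ℝ, 0 < c₁ ∧ 0 < c₂ ∧ ∀ x : ℝ, 2 ≤ x →
        c₁ / Real.log x ≤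
          (∏ p ∈ (Finset.range (⌊x⌋₊ + 1)).filter (fun p => p ∈ P x), (1 - 1 / (p : ℝ))) ∧
        (∏ p ∈ (Finset.range (⌊x⌋₊ + 1)).filter (fun p => p ∈ P x), (1 - 1 / (p : ℝ))) ≤
          c₂ / Real.log x) := by
  have hA : ∀ x : ℝ, 2 ≤ x →
      {p ∈ range (⌊x⌋₊ + 1) | p ∈ P x} = {p ∈ Nat.primesLE ⌊x⌋₊ | p ∈ P x} := by
    intro x hx
    ext p
    simp only [mem_filter, mem_range, Nat.mem_primesLE, Nat.lt_succ_iff]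
    exact ⟨fun ⟨hpx, hp⟩ => ⟨⟨hpx, (hP x hx p hp).1⟩, hp⟩, fun ⟨⟨hpx, _⟩, hp⟩ => ⟨hpx, hp⟩⟩
  have hB : ∀ x : ℝ,
      {p ∈ range (⌊x⌋₊ + 1) | p.Prime ∧ p ∉ P x} = {p ∈ Nat.primesLE ⌊x⌋₊ | p ∉ P x} := by
    intro x
    ext p
    simp only [mem_filter, mem_range, Nat.mem_primesLE, Nat.lt_succ_iff, and_assoc]
  simp only [one_div]
  constructor
  · rintro ⟨C, -, hsum⟩
    obtain ⟨c₁, c₂, hc₁, hc₂, hprod⟩ :=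
      exists_div_log_le_prod_primesLE_filter_le_div_log P fun x hx => hB x ▸ hsum x hx
    exact ⟨c₁, c₂, hc₁, hc₂, fun x hx => hA x hx ▸ hprod x hx⟩
  · rintro ⟨c₁, c₂, -, hc₂, hprod⟩
    obtain ⟨C, hC, hsum⟩ := exists_sum_primesLE_filter_not_le_of_prod_le_div_log P hc₂
      fun x hx => hA x hx ▸ (hprod x hx).2
    exact ⟨C, hC, fun x hx => hB x ▸ hsum x hx⟩
end

section
/- Let m and d be positive integers with d dividing m, and let x ≥ 1 be a real number. Then ∑_{r ≤ x, d | r, r | m} μ(r)/r = μ(d) · ∑_{n ≥ 1, d | n, rad(n) | rad(d)} (1/n) · (∑_{r ≤ x/n, r | m} μ(r)/r), where the outer sum on the right-hand side is over all positive integers n divisible by d all of whose prime divisors divide d, and this sum converges absolutely. -/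
/-!
The right-hand side is `μ d` times the partial sum `∑_{r ≤ x} (h ∗ g) r` of the Dirichlet
convolution of `h n = 1/n` (on `n` with `d ∣ n`, `rad n ∣ rad d`) and `g s = μ s / s`
(on `s ∣ m`); only `n ≤ x` contribute, so the series is a finite sum. For squarefree `d`
write `r = a * b` with `a` built from primes of `d` and `b` coprime to `d`: the admissible
`n ∣ r` are the multiples of `d` dividing `a`, and `r · (h ∗ g) r` factors as
`μ b [b ∣ m] ∑_{d ∣ n ∣ a} μ (a / n) = μ b [b ∣ m] [a = d]`, which `μ d` turns into
`μ r [d ∣ r ∧ r ∣ m]`.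
-/

open Finset ArithmeticFunction
open scoped ArithmeticFunction.Moebius

theorem Nat.exists_mul_eq_primeFactors_subset_coprime {d : ℕ} (hd : d ≠ 0) {r : ℕ} (hr : r ≠ 0) :
    ∃ a b, a * b = r ∧ a.primeFactors ⊆ d.primeFactors ∧ b.Coprime d := by
  induction r using Nat.strong_induction_on with
  | _ r ih =>
  by_cases hrd : r.Coprime d
  · exact ⟨1, r, one_mul r, by simp, hrd⟩
  obtain ⟨p, hp, ⟨r, rfl⟩, hpd⟩ := Nat.Prime.not_coprime_iff_dvd.mp hrd
  have hr' : r ≠ 0 := right_ne_zero_of_mul hr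
  obtain ⟨a, b, rfl, ha, hb⟩ := ih _ (lt_mul_left (Nat.pos_of_ne_zero hr') hp.one_lt) hr'
  refine ⟨p * a, b, mul_assoc p a b, ?_, hb⟩
  rw [Nat.primeFactors_mul hp.ne_zero (left_ne_zero_of_mul hr'), hp.primeFactors]
  exact union_subset (singleton_subset_iff.mpr (Nat.mem_primeFactors.mpr ⟨hp, hpd, hd⟩)) ha

theorem Squarefree.dvd_of_primeFactors_subset {k m : ℕ} (hk : Squarefree k)
    (h : k.primeFactors ⊆ m.primeFactors) : k ∣ m := by
  rcases eq_or_ne m 0 with rfl | hm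
  · exact dvd_zero k
  · simpa [Nat.prod_primeFactors_of_squarefree hk] using (Nat.prod_primeFactors_dvd_iff hm).mpr h

theorem ArithmeticFunction.sum_divisors_moebius (n : ℕ) :
    ∑ s ∈ n.divisors, μ s = if n = 1 then 1 else 0 := by
  rw [← coe_mul_zeta_apply, moebius_mul_coe_zeta, one_apply]

theorem sum_divisors_filter_dvd_moebius_div {a d : ℕ} (ha : a ≠ 0) :
    ∑ n ∈ a.divisors with d ∣ n, μ (a / n) = if a = d then 1 else 0 := by
  by_cases hda : d ∣ a
  · obtain ⟨k, rfl⟩ := hda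
    have hd : d ≠ 0 := left_ne_zero_of_mul ha
    calc ∑ n ∈ (d * k).divisors with d ∣ n, μ (d * k / n)
        = ∑ s ∈ (d * k).divisors, if d ∣ d * k / s then μ s else 0 := by
          rw [sum_filter, ← Nat.sum_div_divisors]
          refine sum_congr rfl fun n hn => ?_
          rw [Nat.div_div_self (Nat.dvd_of_mem_divisors hn) ha]
      _ = ∑ s ∈ (d * k).divisors with s ∣ k, μ s := by
          rw [sum_filter]
          refine sum_congr rfl fun s hs => ?_
          simp only [Nat.dvd_div_iff_mul_dvd (Nat.dvd_of_mem_divisors hs), mul_comm s d,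
            Nat.mul_dvd_mul_iff_left (Nat.pos_of_ne_zero hd)]
      _ = if d * k = d then 1 else 0 := by
          simp only [Nat.divisors_filter_dvd_of_dvd ha (dvd_mul_left k d), sum_divisors_moebius,
            Nat.mul_eq_left hd]
  · rw [if_neg (by rintro rfl; exact hda dvd_rfl)]
    exact sum_eq_zero fun n hn => absurd ((mem_filter.mp hn).2.trans
      (Nat.dvd_of_mem_divisors (mem_filter.mp hn).1)) hda

theorem ite_dvd_moebius_mul {k b m : ℕ} (hkb : k.Coprime b) (hkm : Squarefree k → k ∣ m) :
    (if k * b ∣ m then μ (k * b) else 0) = μ k * if b ∣ m then μ b else 0 := by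
  rw [isMultiplicative_moebius.map_mul_of_coprime hkb]
  by_cases hk : Squarefree k
  · have hkm := hkm hk
    by_cases hbm : b ∣ m
    · rw [if_pos (hkb.mul_dvd_of_dvd_of_dvd hkm hbm), if_pos hbm]
    · rw [if_neg fun h => hbm (dvd_of_mul_left_dvd h), if_neg hbm, mul_zero]
  · simp [moebius_eq_zero_of_not_squarefree hk]

theorem Nat.Coprime.coprime_of_primeFactors_subset {b d k : ℕ} (hbd : b.Coprime d) (hk : k ≠ 0)
    (h : k.primeFactors ⊆ d.primeFactors) : k.Coprime b :=
  Nat.coprime_of_dvd fun _ hp hpk hpb => hp.one_lt.ne' <| Nat.eq_one_of_dvd_coprimes hbd hpb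
    (Nat.dvd_of_mem_primeFactors (h (Nat.mem_primeFactors.mpr ⟨hp, hpk, hk⟩)))

theorem ite_dvd_moebius_div_eq_of_coprime {a b d m n : ℕ} (hdm : d ∣ m)
    (had : a.primeFactors ⊆ d.primeFactors) (hbd : b.Coprime d) (hn : n ∈ (a * b).divisors) :
    (if (d ∣ n ∧ n.primeFactors ⊆ d.primeFactors) ∧ a * b / n ∣ m then μ (a * b / n) else 0) =
      if d ∣ n ∧ n ∣ a then μ (a / n) * (if b ∣ m then μ b else 0) else 0 := by
  obtain ⟨hnab, hab⟩ := Nat.mem_divisors.mp hn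
  have ha : a ≠ 0 := left_ne_zero_of_mul hab
  have hn0 : n ≠ 0 := ne_zero_of_dvd_ne_zero hab hnab
  have hdvd : n.primeFactors ⊆ d.primeFactors ↔ n ∣ a :=
    ⟨fun h => (hbd.coprime_of_primeFactors_subset hn0 h).dvd_of_dvd_mul_right hnab,
      fun h => (Nat.primeFactors_mono h ha).trans had⟩
  simp only [hdvd]
  by_cases hn : d ∣ n ∧ n ∣ a
  · rw [ite_and, if_pos hn, if_pos hn, ← Nat.div_mul_right_comm hn.2]
    have hna : (a / n).primeFactors ⊆ d.primeFactors :=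
      (Nat.primeFactors_mono (Nat.div_dvd_of_dvd hn.2) ha).trans had
    refine ite_dvd_moebius_mul (hbd.coprime_of_primeFactors_subset ?_ hna)
      fun hsq => (hsq.dvd_of_primeFactors_subset hna).trans hdm
    exact Nat.div_ne_zero_iff_of_dvd hn.2 |>.mpr ⟨ha, hn0⟩
  · rw [if_neg hn, if_neg (by tauto)]

theorem moebius_mul_sum_divisors_eq {d m : ℕ} (hdm : d ∣ m) (r : ℕ) :
    μ d * ∑ n ∈ r.divisors,
        (if (d ∣ n ∧ n.primeFactors ⊆ d.primeFactors) ∧ r / n ∣ m then μ (r / n) else 0) =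
      if d ∣ r ∧ r ∣ m then μ r else 0 := by
  by_cases hd : Squarefree d
  swap
  · have hr : d ∣ r → μ r = 0 := fun hdr =>
      moebius_eq_zero_of_not_squarefree fun hr => hd (hr.squarefree_of_dvd hdr)
    simp only [moebius_eq_zero_of_not_squarefree hd, zero_mul]
    split_ifs with h <;> simp [hr, h]
  rcases eq_or_ne r 0 with rfl | hr
  · simp
  obtain ⟨a, b, rfl, had, hbd⟩ := Nat.exists_mul_eq_primeFactors_subset_coprime hd.ne_zero hr
  have ha : a ≠ 0 := left_ne_zero_of_mul hr
  have hsupp : {n ∈ (a * b).divisors | d ∣ n ∧ n ∣ a} = {n ∈ a.divisors | d ∣ n} := by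
    ext n
    simp only [mem_filter, Nat.mem_divisors]
    exact ⟨fun h => ⟨⟨h.2.2, ha⟩, h.2.1⟩, fun h => ⟨⟨dvd_mul_of_dvd_left h.1.1 b, hr⟩, h.2, h.1.1⟩⟩
  rw [sum_congr rfl fun n => ite_dvd_moebius_div_eq_of_coprime hdm had hbd, ← sum_filter, hsupp,
    ← sum_mul, sum_divisors_filter_dvd_moebius_div ha]
  by_cases hadd : a = d
  · subst hadd
    rw [if_pos rfl, one_mul, ← ite_dvd_moebius_mul hbd.symm fun _ => hdm]
    simp only [dvd_mul_right, true_and]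
  · rw [if_neg hadd, zero_mul, mul_zero, eq_comm, ite_eq_right_iff]
    rintro ⟨hdab, -⟩
    by_contra hμ
    have hsq := (moebius_ne_zero_iff_squarefree.mp hμ).squarefree_of_dvd (dvd_mul_right a b)
    exact hadd (Nat.dvd_antisymm (hsq.dvd_of_primeFactors_subset had)
      (hbd.symm.dvd_of_dvd_mul_right hdab))

theorem ArithmeticFunction.hasSum_mul_sum_Ioc_div {R : Type*} [Semiring R] [TopologicalSpace R]
    (f g : ArithmeticFunction R) (N : ℕ) :
    HasSum (fun n => f n * ∑ s ∈ Ioc 0 (N / n), g s) (∑ r ∈ Ioc 0 N, (f * g) r) := by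
  rw [sum_Ioc_mul_eq_sum_sum]
  refine hasSum_sum_of_ne_finset_zero fun n hn => ?_
  rcases Nat.eq_zero_or_pos n with rfl | hn0
  · rw [map_zero, zero_mul]
  · rw [Nat.div_eq_of_lt (by simpa [hn0] using hn), Ioc_self, sum_empty, mul_zero]

noncomputable def invOfRadDvd (d : ℕ) : ArithmeticFunction ℝ :=
  ⟨fun n => if 0 < n ∧ d ∣ n ∧ n.primeFactors ⊆ d.primeFactors then (1 : ℝ) / n else 0, by simp⟩

noncomputable def moebiusDivOfDvd (m : ℕ) : ArithmeticFunction ℝ :=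
  ⟨fun s => if s ∣ m then (μ s : ℝ) / s else 0, by simp⟩

theorem invOfRadDvd_apply (d n : ℕ) : invOfRadDvd d n =
    if 0 < n ∧ d ∣ n ∧ n.primeFactors ⊆ d.primeFactors then (1 : ℝ) / n else 0 := rfl

theorem moebiusDivOfDvd_apply (m s : ℕ) :
    moebiusDivOfDvd m s = if s ∣ m then (μ s : ℝ) / s else 0 := rfl

theorem moebius_mul_invOfRadDvd_mul_moebiusDivOfDvd_apply {d m : ℕ} (hdm : d ∣ m) (r : ℕ) :
    μ d * (invOfRadDvd d * moebiusDivOfDvd m) r = if d ∣ r ∧ r ∣ m then (μ r : ℝ) / r else 0 := by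
  have hterm : ∀ n ∈ r.divisors, invOfRadDvd d n * moebiusDivOfDvd m (r / n) =
      ((if (d ∣ n ∧ n.primeFactors ⊆ d.primeFactors) ∧ r / n ∣ m then μ (r / n) else 0 : ℤ)
        : ℝ) / r := by
    intro n hn
    obtain ⟨hnr, hr⟩ := Nat.mem_divisors.mp hn
    have hn0 : 0 < n := Nat.pos_of_dvd_of_pos hnr (Nat.pos_of_ne_zero hr)
    rw [invOfRadDvd_apply, moebiusDivOfDvd_apply, Nat.cast_div hnr (by positivity)]
    by_cases hn : d ∣ n ∧ n.primeFactors ⊆ d.primeFactors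
    · simp only [hn0, hn, true_and, if_true]
      split_ifs
      · field_simp
      · simp
    · simp [hn]
  rw [mul_apply, Nat.sum_divisorsAntidiagonal (fun n s => invOfRadDvd d n * moebiusDivOfDvd m s),
    sum_congr rfl hterm, ← sum_div, ← Int.cast_sum, ← mul_div_assoc, ← Int.cast_mul,
    moebius_mul_sum_divisors_eq hdm]
  split_ifs <;> simp

theorem invOfRadDvd_mul_sum_Ioc_floor_div (d m : ℕ) (x : ℝ) (n : ℕ) :
    invOfRadDvd d n * ∑ s ∈ Ioc 0 (⌊x⌋₊ / n), moebiusDivOfDvd m s =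
      if 0 < n ∧ d ∣ n ∧ n.primeFactors ⊆ d.primeFactors then
        (1 : ℝ) / n * ∑ r ∈ (Icc 1 ⌊x / n⌋₊).filter (fun r => r ∣ m), (μ r : ℝ) / r
      else 0 := by
  simp only [invOfRadDvd_apply, moebiusDivOfDvd_apply, ite_mul, zero_mul, Nat.floor_div_natCast,
    sum_filter, ← Icc_add_one_left_eq_Ioc, zero_add]

open ArithmeticFunction in
theorem statement10_general (m d : ℕ) (hdm : d ∣ m)
    (x : ℝ) :
    Summable (fun n : ℕ =>
      if 0 < n ∧ d ∣ n ∧ n.primeFactors ⊆ d.primeFactors then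
        (1 : ℝ) / n *
          ∑ r ∈ (Finset.Icc 1 ⌊x / n⌋₊).filter (fun r => r ∣ m), (moebius r : ℝ) / r
      else 0) ∧
    (∑ r ∈ (Finset.Icc 1 ⌊x⌋₊).filter (fun r => d ∣ r ∧ r ∣ m), (moebius r : ℝ) / r) =
      (moebius d : ℝ) *
        ∑' n : ℕ,
          if 0 < n ∧ d ∣ n ∧ n.primeFactors ⊆ d.primeFactors then
            (1 : ℝ) / n *
              ∑ r ∈ (Finset.Icc 1 ⌊x / n⌋₊).filter (fun r => r ∣ m), (moebius r : ℝ) / r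
          else 0 := by
  have h := hasSum_mul_sum_Ioc_div (invOfRadDvd d) (moebiusDivOfDvd m) ⌊x⌋₊
  simp only [invOfRadDvd_mul_sum_Ioc_floor_div] at h
  refine ⟨h.summable, ?_⟩
  rw [h.tsum_eq, mul_sum,
    sum_congr rfl fun r _ => moebius_mul_invOfRadDvd_mul_moebiusDivOfDvd_apply hdm r,
    ← sum_filter, ← Icc_add_one_left_eq_Ioc, zero_add]

open ArithmeticFunction in
theorem statement10 (m d : ℕ) (hm : 0 < m) (hd : 0 < d) (hdm : d ∣ m)
    (x : ℝ) (hx : 1 ≤ x) :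
    Summable (fun n : ℕ =>
      if 0 < n ∧ d ∣ n ∧ n.primeFactors ⊆ d.primeFactors then
        (1 : ℝ) / n *
          ∑ r ∈ (Finset.Icc 1 ⌊x / n⌋₊).filter (fun r => r ∣ m), (moebius r : ℝ) / r
      else 0) ∧
    (∑ r ∈ (Finset.Icc 1 ⌊x⌋₊).filter (fun r => d ∣ r ∧ r ∣ m), (moebius r : ℝ) / r) =
      (moebius d : ℝ) *
        ∑' n : ℕ,
          if 0 < n ∧ d ∣ n ∧ n.primeFactors ⊆ d.primeFactors then
            (1 : ℝ) / n *
              ∑ r ∈ (Finset.Icc 1 ⌊x / n⌋₊).filter (fun r => r ∣ m), (moebius r : ℝ) / r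
          else 0 :=
  statement10_general m d hdm x
end

section
/- For every integer k ≥ 1, ∑_{n ≥ 1, k | n, rad(n) | rad(k)} log(n)/n = (1/φ(k)) · (∑_{p | k, p prime} log(p)/(p−1) + log(k)), where the sum is over all positive integers n divisible by k all of whose prime divisors divide k. Moreover, there exist absolute constants c₁, c₂ > 0 such that for every integer k ≥ 2, c₁·log(k)/φ(k) ≤ ∑_{n ≥ 1, k | n, rad(n) | rad(k)} log(n)/n ≤ c₂·log(k)/φ(k). -/
/-!
Writing `n = k * m`, the `n` in question are `k` times the `k.primeFactors`-factored numbers `m`.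
Over those, `∑ 1/m` is the Euler product `Z = ∏_{p ∣ k} (1 - 1/p)⁻¹ = k / φ k`. Adjoining one
prime at a time, `m = p ^ e * m'` uniquely and `log m = e log p + log m'`, so with
`∑ e p⁻ᵉ = p / (p - 1)²` the sum `∑ log m / m` becomes `Z * ∑_{p ∣ k} log p / (p - 1)`.
The bounds (with `c₁ = 1`, `c₂ = 2`) follow from
`0 ≤ ∑_{p ∣ k} log p / (p - 1) ≤ ∑_{p ∣ k} log p ≤ log k`.
-/

open Finset

theorem Real.log_pow_mul_div (p m : ℝ) (e : ℕ) (hp : p ≠ 0) (hm : m ≠ 0) :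
    Real.log (p ^ e * m) / (p ^ e * m) =
      Real.log p * (e * p⁻¹ ^ e) * m⁻¹ + p⁻¹ ^ e * (Real.log m / m) := by
  rw [Real.log_mul (pow_ne_zero e hp) hm, Real.log_pow, inv_pow]
  field_simp

namespace Nat

theorem hasSum_inv_factoredNumbers (s : Finset ℕ) :
    HasSum (fun m : factoredNumbers s ↦ ((m : ℕ) : ℝ)⁻¹)
      (∏ p ∈ s with p.Prime, (1 - (p : ℝ)⁻¹)⁻¹) := by
  let f : ℕ →* ℝ := (invMonoidHom : ℝ →* ℝ).comp (Nat.castRingHom ℝ : ℕ →* ℝ)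
  refine (EulerProduct.summable_and_hasSum_factoredNumbers_prod_filter_prime_geometric
    (f := f) (fun {p} hp ↦ ?_) s).2
  have : (1 : ℝ) < p := mod_cast hp.one_lt
  simpa [f, abs_of_pos] using inv_lt_one_of_one_lt₀ this

theorem log_div_nonneg_of_mem_factoredNumbers {s : Finset ℕ} (m : factoredNumbers s) :
    0 ≤ Real.log m / m := by
  have : (1 : ℝ) ≤ m := mod_cast Nat.one_le_iff_ne_zero.mpr m.2.1
  exact div_nonneg (Real.log_nonneg this) (by linarith)

theorem hasSum_log_div_factoredNumbers (s : Finset ℕ) :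
    HasSum (fun m : factoredNumbers s ↦ Real.log m / m)
      ((∏ p ∈ s with p.Prime, (1 - (p : ℝ)⁻¹)⁻¹) *
        ∑ p ∈ s with p.Prime, Real.log p / (p - 1)) := by
  induction s using Finset.induction with
  | empty =>
    simp only [filter_empty, sum_empty, mul_zero]
    convert hasSum_zero with m
    have : (m : ℕ) = 1 := by simpa [factoredNumbers_empty] using m.2
    simp [this]
  | insert p s hps ih =>
    by_cases hp : p.Prime
    swap
    · rwa [factoredNumbers_insert s hp, filter_insert, if_neg hp]
    have hp1 : (1 : ℝ) < p := mod_cast hp.one_lt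
    have hq : (p : ℝ)⁻¹ < 1 := inv_lt_one_of_one_lt₀ hp1
    have hq' : ‖(p : ℝ)⁻¹‖ < 1 := by simpa [abs_of_pos] using hq
    have hZ := hasSum_inv_factoredNumbers s
    have hexp : HasSum (fun x : ℕ × factoredNumbers s ↦
        Real.log p * (x.1 * (p : ℝ)⁻¹ ^ x.1) * ((x.2 : ℕ) : ℝ)⁻¹)
        (Real.log p * ((p : ℝ)⁻¹ / (1 - (p : ℝ)⁻¹) ^ 2) *
          ∏ p ∈ s with p.Prime, (1 - (p : ℝ)⁻¹)⁻¹) := by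
      have hlog := (hasSum_coe_mul_geometric_of_norm_lt_one hq').mul_left (Real.log p)
      have hlog0 := Real.log_nonneg hp1.le
      exact (hlog.mul hZ (hlog.summable.mul_of_nonneg hZ.summable (fun e ↦ by positivity)
        (fun m ↦ by positivity)) :)
    have hgeom : HasSum (fun x : ℕ × factoredNumbers s ↦
        (p : ℝ)⁻¹ ^ x.1 * (Real.log (x.2 : ℕ) / (x.2 : ℕ)))
        ((1 - (p : ℝ)⁻¹)⁻¹ * ((∏ p ∈ s with p.Prime, (1 - (p : ℝ)⁻¹)⁻¹) *
          ∑ p ∈ s with p.Prime, Real.log p / (p - 1))) :=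
      ((hasSum_geometric_of_norm_lt_one hq').mul ih
        ((summable_geometric_of_norm_lt_one hq').mul_of_nonneg ih.summable
          (fun e ↦ by positivity) log_div_nonneg_of_mem_factoredNumbers) :)
    rw [← (equivProdNatFactoredNumbers hp hps).hasSum_iff, filter_insert, if_pos hp,
      prod_insert (by simp [hps]), sum_insert (by simp [hps])]
    convert (hexp.add hgeom).congr_fun fun x ↦ ?_ using 1
    · have : (p : ℝ) - 1 ≠ 0 := by linarith
      have : 1 - (p : ℝ)⁻¹ ≠ 0 := by linarith
      field_simp
    · rw [Function.comp_apply, equivProdNatFactoredNumbers_apply', Nat.cast_mul, Nat.cast_pow]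
      exact Real.log_pow_mul_div _ _ _ (by positivity) (mod_cast x.2.2.1)

theorem cast_totient_eq_mul_prod_one_sub_inv {K : Type*} [Field K] [CharZero K] (n : ℕ) :
    (φ n : K) = n * ∏ p ∈ n.primeFactors, (1 - (p : K)⁻¹) := by
  simpa using congrArg (Rat.cast : ℚ → K) (totient_eq_mul_prod_factors n)

theorem pos_and_dvd_and_primeFactors_subset_iff {k n : ℕ} (hk : k ≠ 0) :
    (0 < n ∧ k ∣ n ∧ n.primeFactors ⊆ k.primeFactors) ↔
      ∃ m ∈ factoredNumbers k.primeFactors, k * m = n := by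
  constructor
  · rintro ⟨hn, ⟨m, rfl⟩, hsub⟩
    have hm : m ≠ 0 := by rintro rfl; simp at hn
    refine ⟨m, mem_factoredNumbers_of_primeFactors_subset hm ?_, rfl⟩
    exact (primeFactors_mono (dvd_mul_left m k) hn.ne').trans hsub
  · rintro ⟨m, hm, rfl⟩
    have hm0 := ne_zero_of_mem_factoredNumbers hm
    refine ⟨by positivity, dvd_mul_right k m, ?_⟩
    rw [primeFactors_mul hk hm0]
    exact union_subset subset_rfl (primeFactors_subset_of_mem_factoredNumbers hm)

theorem hasSum_log_div_of_dvd_of_primeFactors_subset {k : ℕ} (hk : k ≠ 0) :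
    HasSum (fun n : ℕ ↦
        if 0 < n ∧ k ∣ n ∧ n.primeFactors ⊆ k.primeFactors then Real.log n / n else 0)
      (1 / (φ k : ℝ) * (∑ p ∈ k.primeFactors, Real.log p / (p - 1) + Real.log k)) := by
  have hinj : Function.Injective (fun m : factoredNumbers k.primeFactors ↦ k * (m : ℕ)) :=
    fun m m' h ↦ Subtype.ext (Nat.eq_of_mul_eq_mul_left (Nat.pos_of_ne_zero hk) h)
  rw [← hinj.hasSum_iff fun n hn ↦ if_neg fun h ↦ hn <| by
    simpa using (pos_and_dvd_and_primeFactors_subset_iff hk).mp h]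
  have hprime : {p ∈ k.primeFactors | p.Prime} = k.primeFactors :=
    filter_true_of_mem fun p hp ↦ prime_of_mem_primeFactors hp
  have hZ := hasSum_inv_factoredNumbers k.primeFactors
  have hL := hasSum_log_div_factoredNumbers k.primeFactors
  rw [hprime] at hZ hL
  have hval : 1 / (φ k : ℝ) * (∑ p ∈ k.primeFactors, Real.log p / (p - 1) + Real.log k) =
      Real.log k / k * ∏ p ∈ k.primeFactors, (1 - (p : ℝ)⁻¹)⁻¹ +
        (k : ℝ)⁻¹ * ((∏ p ∈ k.primeFactors, (1 - (p : ℝ)⁻¹)⁻¹) *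
          ∑ p ∈ k.primeFactors, Real.log p / (p - 1)) := by
    have : ∏ p ∈ k.primeFactors, (1 - (p : ℝ)⁻¹) ≠ 0 := prod_ne_zero_iff.mpr fun p hp ↦
      (sub_pos.mpr (inv_lt_one_of_one_lt₀ (mod_cast (prime_of_mem_primeFactors hp).one_lt))).ne'
    have : (k : ℝ) ≠ 0 := mod_cast hk
    rw [cast_totient_eq_mul_prod_one_sub_inv, prod_inv_distrib]
    field_simp
    ring
  rw [hval]
  refine ((hZ.mul_left _).add (hL.mul_left _)).congr_fun fun m ↦ ?_
  have hk' : (k : ℝ) ≠ 0 := mod_cast hk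
  have hm : ((m : ℕ) : ℝ) ≠ 0 := mod_cast m.2.1
  rw [Function.comp_apply,
    if_pos ((pos_and_dvd_and_primeFactors_subset_iff hk).mpr ⟨m, m.2, rfl⟩),
    Nat.cast_mul, Real.log_mul hk' hm]
  field_simp

theorem sum_primeFactors_log_div_sub_one_nonneg (n : ℕ) :
    0 ≤ ∑ p ∈ n.primeFactors, Real.log p / ((p : ℝ) - 1) :=
  sum_nonneg fun p hp ↦ by
    have : (1 : ℝ) < p := mod_cast (prime_of_mem_primeFactors hp).one_lt
    exact div_nonneg (Real.log_nonneg this.le) (by linarith)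

theorem sum_primeFactors_log_div_sub_one_le_log (n : ℕ) :
    ∑ p ∈ n.primeFactors, Real.log p / ((p : ℝ) - 1) ≤ Real.log n := by
  rcases eq_or_ne n 0 with rfl | hn
  · simp
  have hpos : ∀ p ∈ n.primeFactors, (0 : ℝ) < p :=
    fun p hp ↦ mod_cast pos_of_mem_primeFactors hp
  calc ∑ p ∈ n.primeFactors, Real.log p / ((p : ℝ) - 1)
      ≤ ∑ p ∈ n.primeFactors, Real.log p := sum_le_sum fun p hp ↦ by
        have : (2 : ℝ) ≤ p := mod_cast (prime_of_mem_primeFactors hp).two_le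
        exact _root_.div_le_self (Real.log_nonneg (by linarith)) (by linarith)
    _ = Real.log (∏ p ∈ n.primeFactors, (p : ℝ)) :=
        (Real.log_prod fun p hp ↦ (hpos p hp).ne').symm
    _ ≤ Real.log n := by
        refine Real.log_le_log (prod_pos hpos) ?_
        rw [← Nat.cast_prod]
        exact_mod_cast le_of_dvd (Nat.pos_of_ne_zero hn) (prod_primeFactors_dvd n)

end Nat

theorem statement11 :
    (∀ k : ℕ, 1 ≤ k →
      Summable (fun n : ℕ =>
        if 0 < n ∧ k ∣ n ∧ n.primeFactors ⊆ k.primeFactors then Real.log n / n else 0) ∧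
      (∑' n : ℕ,
          if 0 < n ∧ k ∣ n ∧ n.primeFactors ⊆ k.primeFactors then Real.log n / n else 0) =
        (1 / (Nat.totient k : ℝ)) *
          ((∑ p ∈ k.primeFactors, Real.log p / ((p : ℝ) - 1)) + Real.log k)) ∧
    (∃ c₁ c₂ : ℝ, 0 < c₁ ∧ 0 < c₂ ∧ ∀ k : ℕ, 2 ≤ k →
      c₁ * Real.log k / (Nat.totient k : ℝ) ≤
        (∑' n : ℕ,
          if 0 < n ∧ k ∣ n ∧ n.primeFactors ⊆ k.primeFactors then Real.log n / n else 0) ∧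
      (∑' n : ℕ,
          if 0 < n ∧ k ∣ n ∧ n.primeFactors ⊆ k.primeFactors then Real.log n / n else 0) ≤
        c₂ * Real.log k / (Nat.totient k : ℝ)) := by
  have key (k : ℕ) (hk : 1 ≤ k) :=
    Nat.hasSum_log_div_of_dvd_of_primeFactors_subset (k := k) (by omega)
  refine ⟨fun k hk ↦ ⟨(key k hk).summable, (key k hk).tsum_eq⟩, 1, 2, one_pos, two_pos,
    fun k hk ↦ ?_⟩
  rw [(key k (by omega)).tsum_eq, one_div_mul_eq_div]
  have hT0 := Nat.sum_primeFactors_log_div_sub_one_nonneg k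
  have hTle := Nat.sum_primeFactors_log_div_sub_one_le_log k
  constructor <;> gcongr <;> linarith
end

section
/- Let k ≥ 1 be an integer, x ≥ 2 a real number, and r a positive integer. Then the sum of 1/q_k over all k-tuples of primes r < q₁ < q₂ < ⋯ < q_k ≤ x satisfying r | q₁−1 and q_i | q_{i+1}−1 for 1 ≤ i ≤ k−1 is at most (log(x)+1)^k / r. Consequently, the number of (k+1)-tuples (q₁, …, q_k, n), where q₁ < ⋯ < q_k are primes in (r, x] satisfying r | q₁−1 and q_i | q_{i+1}−1 for 1 ≤ i ≤ k−1, and n ≤ x is a positive integer with q_k | n, is at most x·(log(x)+1)^k / r. -/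
/-!
Put `q₀ = r`. In a chain `r < q₁ < ⋯ < q_k` with `q_{i-1} ∣ q_i - 1` write `q_i = q_{i-1} f_i + 1`.
The quotients `f_i ∈ [1, x]` determine the chain, and `q_k ≥ r f₁ ⋯ f_k`, so the sum of `1 / q_k`
is at most `r⁻¹ (∑_{f ≤ x} 1 / f)^k ≤ (log x + 1)^k / r`. For the count, a chain admits at most
`x / q_k` multiples `n ≤ x` of `q_k`.
-/

open Finset

section ModOneChain

variable {k : ℕ}

def IsModOneChain (c : Fin (k + 1) → ℕ) : Prop :=
  ∀ i : Fin k, c i.castSucc < c i.succ ∧ c i.castSucc ∣ c i.succ - 1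

def chainQuot (c : Fin (k + 1) → ℕ) (i : Fin k) : ℕ :=
  (c i.succ - 1) / c i.castSucc

theorem chainQuot_le (c : Fin (k + 1) → ℕ) (i : Fin k) : chainQuot c i ≤ c i.succ :=
  (Nat.div_le_self _ _).trans (Nat.sub_le _ _)

theorem head_mul_prod_chainQuot_le_last : ∀ {k : ℕ} (c : Fin (k + 1) → ℕ),
    c 0 * ∏ i, chainQuot c i ≤ c (Fin.last k)
  | 0, c => by simp
  | k + 1, c => by
    rw [Fin.prod_univ_castSucc, ← mul_assoc]
    calc (c 0 * ∏ i : Fin k, chainQuot c i.castSucc) * chainQuot c (Fin.last k)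
        ≤ c (Fin.last k).castSucc * chainQuot c (Fin.last k) :=
          Nat.mul_le_mul_right _ (head_mul_prod_chainQuot_le_last (c ∘ Fin.castSucc))
      _ ≤ c (Fin.last (k + 1)) := (Nat.mul_div_le _ _).trans (Nat.sub_le _ _)

namespace IsModOneChain

variable {c c' : Fin (k + 1) → ℕ}

theorem pos (hc : IsModOneChain c) (h0 : 0 < c 0) (j : Fin (k + 1)) : 0 < c j :=
  Fin.induction h0 (fun i hi => hi.trans (hc i).1) j

theorem succ_eq (hc : IsModOneChain c) (i : Fin k) :
    c i.succ = c i.castSucc * chainQuot c i + 1 := by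
  have := (hc i).1
  rw [chainQuot, Nat.mul_div_cancel' (hc i).2]
  omega

theorem one_le_chainQuot (hc : IsModOneChain c) (h0 : 0 < c 0) (i : Fin k) :
    1 ≤ chainQuot c i :=
  (Nat.one_le_div_iff (hc.pos h0 _)).2 (Nat.le_sub_one_of_lt (hc i).1)

theorem eq_of_chainQuot_eq (hc : IsModOneChain c) (hc' : IsModOneChain c')
    (h0 : c 0 = c' 0) (h : chainQuot c = chainQuot c') : c = c' :=
  funext fun j => Fin.induction h0 (fun i hi => by rw [hc.succ_eq, hc'.succ_eq, hi, h]) j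

end IsModOneChain

theorem isModOneChain_cons {r : ℕ} {q : Fin k → ℕ} (hk : 0 < k) (hq : StrictMono q)
    (h0 : r < q ⟨0, hk⟩) (h0d : r ∣ q ⟨0, hk⟩ - 1)
    (hd : ∀ i (h : i + 1 < k), q ⟨i, by omega⟩ ∣ q ⟨i + 1, h⟩ - 1) :
    IsModOneChain (Fin.cons r q : Fin (k + 1) → ℕ) := by
  rintro ⟨_ | i, hi⟩
  · exact ⟨h0, h0d⟩
  · have : (⟨i + 1, hi⟩ : Fin k).castSucc = (⟨i, by omega⟩ : Fin k).succ := rfl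
    rw [this, Fin.cons_succ, Fin.cons_succ]
    exact ⟨hq (Fin.mk_lt_mk.2 (by omega)), hd i hi⟩

theorem sum_inv_chain_last_le {r N : ℕ} (hr : 0 < r) {s : Finset (Fin k → ℕ)}
    (hs : ∀ q ∈ s, IsModOneChain (Fin.cons r q : Fin (k + 1) → ℕ) ∧ ∀ i, q i ≤ N) :
    ∑ q ∈ s, (1 : ℝ) / (Fin.cons r q : Fin (k + 1) → ℕ) (Fin.last k) ≤ harmonic N ^ k / r := by
  set F : (Fin k → ℕ) → Fin k → ℕ := fun q => chainQuot (Fin.cons r q : Fin (k + 1) → ℕ)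
  have hF_pos (q) (hq : q ∈ s) (i) : 1 ≤ F q i := (hs q hq).1.one_le_chainQuot hr i
  have hF_mem : ∀ q ∈ s, F q ∈ Fintype.piFinset fun _ => Icc 1 N := fun q hq =>
    Fintype.mem_piFinset.2 fun i =>
      mem_Icc.2 ⟨hF_pos q hq i, (chainQuot_le _ i).trans (by simpa using (hs q hq).2 i)⟩
  have hF_inj : Set.InjOn F s := fun q hq q' hq' h =>
    (Fin.cons_inj.1 ((hs q hq).1.eq_of_chainQuot_eq (hs q' hq').1 rfl h)).2
  calc ∑ q ∈ s, (1 : ℝ) / (Fin.cons r q : Fin (k + 1) → ℕ) (Fin.last k)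
      ≤ ∑ q ∈ s, (r : ℝ)⁻¹ * ∏ i, (F q i : ℝ)⁻¹ := sum_le_sum fun q hq => by
        have hpos : 0 < r * ∏ i, F q i := Nat.mul_pos hr (prod_pos fun i _ => hF_pos q hq i)
        have hle := head_mul_prod_chainQuot_le_last (Fin.cons r q : Fin (k + 1) → ℕ)
        rw [prod_inv_distrib, ← mul_inv, ← one_div]
        exact one_div_le_one_div_of_le (by exact_mod_cast hpos) (by exact_mod_cast hle)
    _ = ∑ f ∈ s.image F, (r : ℝ)⁻¹ * ∏ i, (f i : ℝ)⁻¹ :=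
        (sum_image (f := fun f => (r : ℝ)⁻¹ * ∏ i, (f i : ℝ)⁻¹) hF_inj).symm
    _ ≤ ∑ f ∈ Fintype.piFinset fun _ : Fin k => Icc 1 N, (r : ℝ)⁻¹ * ∏ i, (f i : ℝ)⁻¹ :=
        sum_le_sum_of_subset_of_nonneg (image_subset_iff.2 hF_mem) fun _ _ _ => by positivity
    _ = harmonic N ^ k / r := by
        rw [← mul_sum, ← prod_univ_sum (fun _ => Icc 1 N) fun _ t => (t : ℝ)⁻¹, prod_const,
          card_univ, Fintype.card_fin, harmonic_eq_sum_Icc]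
        push_cast
        ring

end ModOneChain

theorem card_filter_product_Icc_le_sum_div {α : Type*} {s : Finset α} {N : ℕ}
    {P : α → Prop} [DecidablePred P] {p : α × ℕ → Prop} [DecidablePred p] {d : α → ℕ}
    (hp : ∀ a n, p (a, n) → P a ∧ d a ∣ n) :
    #((s ×ˢ Icc 1 N).filter p) ≤ ∑ a ∈ s.filter P, N / d a := by
  calc #((s ×ˢ Icc 1 N).filter p)
      ≤ #((s.filter P ×ˢ Icc 1 N).filter fun an => d an.1 ∣ an.2) := by
        refine card_le_card fun an han => ?_
        obtain ⟨hmem, han⟩ := mem_filter.1 han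
        obtain ⟨ha, hn⟩ := mem_product.1 hmem
        exact mem_filter.2 ⟨mem_product.2 ⟨mem_filter.2 ⟨ha, (hp _ _ han).1⟩, hn⟩, (hp _ _ han).2⟩
    _ = ∑ a ∈ s.filter P, N / d a := by
        rw [card_filter, sum_product]
        refine sum_congr rfl fun a _ => ?_
        rw [← card_filter, ← Nat.Ioc_filter_dvd_card_eq_div, ← Icc_add_one_left_eq_Ioc, zero_add]

theorem card_filter_product_Icc_le_mul {α : Type*} {s : Finset α} {x B : ℝ} (hx : 0 ≤ x)
    {P : α → Prop} [DecidablePred P] {p : α × ℕ → Prop} [DecidablePred p] {d : α → ℕ}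
    (hp : ∀ a n, p (a, n) → P a ∧ d a ∣ n) (hB : ∑ a ∈ s.filter P, (1 : ℝ) / d a ≤ B) :
    (#((s ×ˢ Icc 1 ⌊x⌋₊).filter p) : ℝ) ≤ x * B := by
  calc (#((s ×ˢ Icc 1 ⌊x⌋₊).filter p) : ℝ)
      ≤ ∑ a ∈ s.filter P, ((⌊x⌋₊ / d a : ℕ) : ℝ) := by
        exact_mod_cast card_filter_product_Icc_le_sum_div hp
    _ ≤ ∑ a ∈ s.filter P, x * ((1 : ℝ) / d a) := sum_le_sum fun a _ => by
        rw [mul_one_div]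
        exact Nat.cast_div_le.trans (by gcongr; exact Nat.floor_le hx)
    _ ≤ x * B := by rw [← mul_sum]; gcongr

open scoped Classical in
theorem statement13 (k : ℕ) (hk : 1 ≤ k) (x : ℝ) (hx : 2 ≤ x) (r : ℕ) (hr : 0 < r) :
    (∑ q ∈ (Fintype.piFinset fun _ : Fin k => Finset.range (⌊x⌋₊ + 1)).filter
        (fun q : Fin k → ℕ =>
          (∀ i, (q i).Prime) ∧ StrictMono q ∧
          r < q ⟨0, hk⟩ ∧ ((q ⟨k - 1, by omega⟩ : ℕ) : ℝ) ≤ x ∧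
          r ∣ q ⟨0, hk⟩ - 1 ∧
          ∀ i : ℕ, (h : i + 1 < k) →
            q ⟨i, by omega⟩ ∣ q ⟨i + 1, h⟩ - 1),
        (1 : ℝ) / (q ⟨k - 1, by omega⟩ : ℝ)) ≤ (Real.log x + 1) ^ k / r ∧
    ((((Fintype.piFinset fun _ : Fin k => Finset.range (⌊x⌋₊ + 1)) ×ˢ
        Finset.Icc 1 ⌊x⌋₊).filter
        (fun qn : (Fin k → ℕ) × ℕ =>
          (∀ i, (qn.1 i).Prime) ∧ StrictMono qn.1 ∧
          r < qn.1 ⟨0, hk⟩ ∧ ((qn.1 ⟨k - 1, by omega⟩ : ℕ) : ℝ) ≤ x ∧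
          r ∣ qn.1 ⟨0, hk⟩ - 1 ∧
          (∀ i : ℕ, (h : i + 1 < k) →
            qn.1 ⟨i, by omega⟩ ∣ qn.1 ⟨i + 1, h⟩ - 1) ∧
          0 < qn.2 ∧ ((qn.2 : ℕ) : ℝ) ≤ x ∧ qn.1 ⟨k - 1, by omega⟩ ∣ qn.2)).card : ℝ) ≤
      x * (Real.log x + 1) ^ k / r := by
  have hlast : Fin.last k = (⟨k - 1, by omega⟩ : Fin k).succ := Fin.ext (by simp; omega)
  rw [mul_div_assoc]
  refine ⟨?sum, card_filter_product_Icc_le_mul (by linarith) ?_ ?sum⟩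
  case sum =>
    calc _ = ∑ q ∈ _, (1 : ℝ) / (Fin.cons r q : Fin (k + 1) → ℕ) (Fin.last k) :=
          sum_congr rfl fun q _ => by rw [hlast, Fin.cons_succ]
      _ ≤ harmonic ⌊x⌋₊ ^ k / r := by
          refine sum_inv_chain_last_le hr fun q hq => ?_
          obtain ⟨hmem, -, hmono, h0, -, h0d, hd⟩ := mem_filter.1 hq
          refine ⟨isModOneChain_cons hk hmono h0 h0d hd, fun i => ?_⟩
          simpa [Nat.lt_succ_iff] using Fintype.mem_piFinset.1 hmem i
      _ ≤ (Real.log x + 1) ^ k / r := by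
          gcongr
          · exact_mod_cast (harmonic_pos (Nat.floor_pos.2 (by linarith)).ne').le
          · linarith [harmonic_floor_le_one_add_log x (by linarith)]
  · rintro q n ⟨hprime, hmono, h0, hle, h0d, hd, -, -, hdvd⟩
    exact ⟨⟨hprime, hmono, h0, hle, h0d, hd⟩, hdvd⟩
end

section
/- Let x ≥ y ≥ 2 be real numbers and k ≥ 1 an integer. Define P_0 = {p prime : p ≤ y} and P_{j+1} = {p prime : p ≤ x and every prime q dividing p−1 lies in P_j}; let Ψ(x,P_k) be the number of positive integers n ≤ x all of whose prime divisors lie in P_k; let Φ_k(x,y) be the number of positive integers n ≤ x such that every prime divisor of φ_k(n) is at most y; and for i ≥ 0 let S_i(x,y) = {n ≤ x : there exists a prime p > y with p² | φ_i(n)}. Then 0 ≤ Ψ(x,P_k) − Φ_k(x,y) ≤ ∑_{i=0}^{k−1} |S_i(x,y)|. -/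
/-- `Sset i x y` is the set of positive integers `n ≤ x` for which there exists a prime
`p > y` with `p² ∣ φ_i(n)`. -/
def Sset (i : ℕ) (x y : ℝ) : Set ℕ :=
  {n : ℕ | 0 < n ∧ (n : ℝ) ≤ x ∧
    ∃ p : ℕ, p.Prime ∧ y < (p : ℝ) ∧ p ^ 2 ∣ Nat.totient^[i] n}

/-!
If the primes of `φ_k(n)` are at most `y`, then every prime `p ∣ n` lies in `P_k`, because
`p - 1 = φ(p)` divides `φ(n)`; so the `φ_k`-smooth `n ≤ x` are among the `P_k`-smooth ones.
Conversely a prime `q ∣ φ(n)` either divides `p - 1` for some prime `p ∣ n` or satisfies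
`q² ∣ n`, so `P_{j+1}`-smoothness of `n` passes to `P_j`-smoothness of `φ(n)` unless some
prime `q > y` has `q² ∣ n`. Hence a `P_k`-smooth `n ≤ x` with `φ_k(n)` not `y`-smooth lies in
some `S_i(x, y)` with `i < k`.
-/

open Nat

def PrimeFactorsIn (P : Set ℕ) (n : ℕ) : Prop :=
  ∀ p : ℕ, p.Prime → p ∣ n → p ∈ P

theorem Nat.sq_dvd_or_dvd_sub_one_of_prime_dvd_totient {q n : ℕ} (hq : q.Prime)
    (h : q ∣ φ n) : q ^ 2 ∣ n ∨ ∃ p : ℕ, p.Prime ∧ p ∣ n ∧ q ∣ p - 1 := by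
  rcases eq_or_ne n 0 with rfl | hn
  · exact Or.inl (dvd_zero _)
  rw [totient_eq_prod_factorization hn] at h
  obtain ⟨p, hp, hqp⟩ := hq.prime.dvd_finsuppProd_iff.1 h
  rw [support_factorization] at hp
  have hpp := prime_of_mem_primeFactors hp
  have hpn := dvd_of_mem_primeFactors hp
  rcases hq.prime.dvd_mul.1 hqp with hq_pow | hq_sub
  · have hqp : q = p := (prime_dvd_prime_iff_eq hq hpp).1 (hq.dvd_of_dvd_pow hq_pow)
    have hexp : 2 ≤ n.factorization p := by
      by_contra! hlt
      have : n.factorization p - 1 = 0 := by omega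
      rw [this, pow_zero] at hq_pow
      exact hq.one_lt.ne' (Nat.dvd_one.1 hq_pow)
    exact Or.inl (hqp ▸ (pow_dvd_pow p hexp).trans (ordProj_dvd n p))
  · exact Or.inr ⟨p, hpp, hpn, hq_sub⟩

theorem finite_setOf_natCast_le (x : ℝ) : {n : ℕ | (n : ℝ) ≤ x}.Finite :=
  (Set.finite_Iic ⌊x⌋₊).subset fun _ hn => le_floor hn

theorem Set.ncard_sub_ncard_le_sum_of_sdiff_subset {α ι : Type*} {A B : Set α} (s : Finset ι)
    {S : ι → Set α} (hB : B.Finite) (hS : ∀ i ∈ s, (S i).Finite)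
    (h : A \ B ⊆ ⋃ i ∈ s, S i) :
    (A.ncard : ℝ) - B.ncard ≤ ∑ i ∈ s, ((S i).ncard : ℝ) := by
  have hcover : (A \ B).ncard ≤ ∑ i ∈ s, (S i).ncard :=
    (Set.ncard_le_ncard h (s.finite_toSet.biUnion hS)).trans (s.set_ncard_biUnion_le S)
  have hA : A.ncard ≤ ∑ i ∈ s, (S i).ncard + B.ncard :=
    (Set.ncard_le_ncard_sdiff_add_ncard A B hB).trans (Nat.add_le_add_right hcover _)
  rw [sub_le_iff_le_add]
  exact_mod_cast hA

section IteratedPrimes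

variable {x y : ℝ}

theorem iterP_zero_subset (hyx : y ≤ x) : ∀ j, iterP x y 0 ⊆ iterP x y j
  | 0 => subset_rfl
  | j + 1 => by
    rintro p ⟨hp, hpy⟩
    refine ⟨hp, hpy.trans hyx, fun q hq hqp => iterP_zero_subset hyx j ⟨hq, ?_⟩⟩
    have hqp_lt : q < p :=
      (Nat.le_of_dvd (Nat.sub_pos_of_lt hp.one_lt) hqp).trans_lt (Nat.sub_lt hp.pos one_pos)
    exact (Nat.cast_le.2 hqp_lt.le).trans hpy

theorem primeFactorsIn_iterP_succ {n j : ℕ} (hn : n ≠ 0) (hnx : (n : ℝ) ≤ x)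
    (h : PrimeFactorsIn (iterP x y j) (φ n)) : PrimeFactorsIn (iterP x y (j + 1)) n :=
  fun _ hp hpn =>
    ⟨hp, (Nat.cast_le.2 (Nat.le_of_dvd (Nat.pos_of_ne_zero hn) hpn)).trans hnx,
      fun q hq hqp => h q hq (hqp.trans (totient_prime hp ▸ totient_dvd_of_dvd hpn))⟩

theorem totient_primeFactorsIn_iterP (hyx : y ≤ x) {n j : ℕ}
    (h : PrimeFactorsIn (iterP x y (j + 1)) n)
    (hsq : ∀ q : ℕ, q.Prime → y < q → ¬ q ^ 2 ∣ n) : PrimeFactorsIn (iterP x y j) (φ n) := by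
  intro q hq hqφ
  rcases sq_dvd_or_dvd_sub_one_of_prime_dvd_totient hq hqφ with hq_sq | ⟨p, hp, hpn, hqp⟩
  · exact iterP_zero_subset hyx j ⟨hq, not_lt.1 fun hyq => hsq q hq hyq hq_sq⟩
  · exact (h p hp hpn).2.2 q hq hqp

theorem primeFactorsIn_iterP_of_iterate_totient :
    ∀ (k n : ℕ), n ≠ 0 → (n : ℝ) ≤ x →
      (∀ p : ℕ, p.Prime → p ∣ φ^[k] n → (p : ℝ) ≤ y) → PrimeFactorsIn (iterP x y k) n
  | 0, _, _, _, h => fun p hp hpn => ⟨hp, h p hp hpn⟩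
  | k + 1, n, hn, hnx, h =>
    primeFactorsIn_iterP_succ hn hnx <|
      primeFactorsIn_iterP_of_iterate_totient k (φ n) (totient_pos.2 (Nat.pos_of_ne_zero hn)).ne'
        ((Nat.cast_le.2 (totient_le n)).trans hnx) h

theorem iterate_totient_smooth_of_primeFactorsIn_iterP (hyx : y ≤ x) :
    ∀ (k n : ℕ), PrimeFactorsIn (iterP x y k) n →
      (∀ i < k, ∀ q : ℕ, q.Prime → y < q → ¬ q ^ 2 ∣ φ^[i] n) →
      ∀ p : ℕ, p.Prime → p ∣ φ^[k] n → (p : ℝ) ≤ y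
  | 0, _, h, _ => fun p hp hpn => (h p hp hpn).2
  | k + 1, _, h, hsq =>
    iterate_totient_smooth_of_primeFactorsIn_iterP hyx k _
      (totient_primeFactorsIn_iterP hyx h (hsq 0 k.succ_pos)) fun i hi => hsq (i + 1) (by omega)

end IteratedPrimes

theorem statement14_general (x y : ℝ) (hyx : y ≤ x) (k : ℕ) :
    PhiSmooth k x y ≤ smoothIn x (iterP x y k) ∧
    (smoothIn x (iterP x y k) : ℝ) - (PhiSmooth k x y : ℝ) ≤
      ∑ i ∈ Finset.range k, ((Sset i x y).ncard : ℝ) := by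
  set A := {n : ℕ | 0 < n ∧ (n : ℝ) ≤ x ∧ PrimeFactorsIn (iterP x y k) n}
  set B := {n : ℕ | 0 < n ∧ (n : ℝ) ≤ x ∧
    ∀ p : ℕ, p.Prime → p ∣ φ^[k] n → (p : ℝ) ≤ y}
  have hfinite {S : Set ℕ} (hS : ∀ n ∈ S, (n : ℝ) ≤ x) : S.Finite :=
    (finite_setOf_natCast_le x).subset hS
  have hBA : B ⊆ A := fun n ⟨hn, hnx, h⟩ =>
    ⟨hn, hnx, primeFactorsIn_iterP_of_iterate_totient k n hn.ne' hnx h⟩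
  have hAB : A \ B ⊆ ⋃ i ∈ Finset.range k, Sset i x y := by
    rintro n ⟨⟨hn, hnx, h⟩, hnB⟩
    by_contra hS
    simp only [Set.mem_iUnion, Finset.mem_range, not_exists] at hS
    exact hnB ⟨hn, hnx, iterate_totient_smooth_of_primeFactorsIn_iterP hyx k n h
      fun i hi q hq hyq hdvd => hS i hi ⟨hn, hnx, q, hq, hyq, hdvd⟩⟩
  exact ⟨Set.ncard_le_ncard hBA (hfinite fun n hn => hn.2.1),
    Set.ncard_sub_ncard_le_sum_of_sdiff_subset _ (hfinite fun n hn => hn.2.1)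
      (fun i _ => hfinite fun n hn => hn.2.1) hAB⟩

theorem statement14 (x y : ℝ) (hy : 2 ≤ y) (hyx : y ≤ x) (k : ℕ) (hk : 1 ≤ k) :
    PhiSmooth k x y ≤ smoothIn x (iterP x y k) ∧
    (smoothIn x (iterP x y k) : ℝ) - (PhiSmooth k x y : ℝ) ≤
      ∑ i ∈ Finset.range k, ((Sset i x y).ncard : ℝ) :=
  statement14_general x y hyx k
end

section
/- Let χ : [1,∞) → [0,∞) be a measurable function such that ∫₁^∞ χ(t)·e^{ξ·t} dt converges for every real ξ, and such that C := ∫₁^∞ χ(v) dv > 0. Let u ≥ C² and let ξ(u) > 0 satisfy u = ∫₁^∞ χ(v)·e^{ξ(u)·v} dv. Then for every ε > 0, ∫₁^∞ χ(v)·e^{(ξ(u)+ε)·v} dv ≥ u^{1 + ε/(2·ξ(u))}. -/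
/-!
By Hölder's inequality, `ξ ↦ log ∫ χ v e^{ξ v} dv` is convex. Writing `ξu` as the convex
combination of `0` and `ξu + ε` with weights `ε / (ξu + ε)` and `ξu / (ξu + ε)` gives
`u ≤ C ^ (ε / (ξu + ε)) * I ^ (ξu / (ξu + ε))` with `I = ∫ χ v e^{(ξu + ε) v} dv`; raising this
to the power `(ξu + ε) / ξu` and bounding `C ≤ √u` yields the claim.
-/

open MeasureTheory Real

section Holder

variable {α : Type*} [MeasurableSpace α] {μ : Measure α}

theorem MeasureTheory.Integrable.memLp_rpow_of_nonneg {f : α → ℝ} (hf : Integrable f μ)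
    (hf0 : 0 ≤ᵐ[μ] f) {a : ℝ} (ha : 0 < a) :
    MemLp (fun x => f x ^ a) (ENNReal.ofReal (1 / a)) μ := by
  have h0 : ENNReal.ofReal (1 / a) ≠ 0 := by positivity
  have hmeas : AEStronglyMeasurable (fun x => f x ^ a) μ :=
    (hf.aemeasurable.pow_const a).aestronglyMeasurable
  rw [← memLp_norm_rpow_iff hmeas h0 ENNReal.ofReal_ne_top,
    ENNReal.div_self h0 ENNReal.ofReal_ne_top, memLp_one_iff_integrable,
    ENNReal.toReal_ofReal (by positivity)]
  refine hf.congr ?_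
  filter_upwards [hf0] with x hx
  rw [norm_of_nonneg (rpow_nonneg hx a), ← rpow_mul hx, mul_one_div_cancel ha.ne', rpow_one]

theorem integral_rpow_mul_rpow_le {f g : α → ℝ} (hf : Integrable f μ) (hg : Integrable g μ)
    (hf0 : 0 ≤ᵐ[μ] f) (hg0 : 0 ≤ᵐ[μ] g) {a b : ℝ} (ha : 0 < a) (hb : 0 < b)
    (hab : a + b = 1) :
    ∫ x, f x ^ a * g x ^ b ∂μ ≤ (∫ x, f x ∂μ) ^ a * (∫ x, g x ∂μ) ^ b := by
  have holder := integral_mul_le_Lp_mul_Lq_of_nonneg (holderConjugate_one_div ha hb hab)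
    (by filter_upwards [hf0] with x hx using rpow_nonneg hx a)
    (by filter_upwards [hg0] with x hx using rpow_nonneg hx b)
    (hf.memLp_rpow_of_nonneg hf0 ha) (hg.memLp_rpow_of_nonneg hg0 hb)
  have rpow_inv : ∀ {h : α → ℝ} {c : ℝ}, 0 ≤ᵐ[μ] h → c ≠ 0 →
      ∫ x, (h x ^ c) ^ (1 / c) ∂μ = ∫ x, h x ∂μ := fun hh hc =>
    integral_congr_ae (by
      filter_upwards [hh] with x hx
      rw [← rpow_mul hx, mul_one_div_cancel hc, rpow_one])
  rwa [rpow_inv hf0 ha.ne', rpow_inv hg0 hb.ne', one_div_one_div, one_div_one_div] at holder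

end Holder

theorem integral_mul_exp_le_rpow_mul_rpow {μ : Measure ℝ} {χ : ℝ → ℝ} (hχ : 0 ≤ᵐ[μ] χ)
    {s t : ℝ} (hs : Integrable (fun v => χ v * exp (s * v)) μ)
    (ht : Integrable (fun v => χ v * exp (t * v)) μ) {a b : ℝ} (ha : 0 < a) (hb : 0 < b)
    (hab : a + b = 1) :
    ∫ v, χ v * exp ((a * s + b * t) * v) ∂μ ≤
      (∫ v, χ v * exp (s * v) ∂μ) ^ a * (∫ v, χ v * exp (t * v) ∂μ) ^ b := by
  refine le_of_eq_of_le (integral_congr_ae ?_) (integral_rpow_mul_rpow_le hs ht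
    (by filter_upwards [hχ] with v hv using mul_nonneg hv (exp_pos _).le)
    (by filter_upwards [hχ] with v hv using mul_nonneg hv (exp_pos _).le) ha hb hab)
  filter_upwards [hχ] with v hv
  rw [mul_rpow hv (exp_pos _).le, mul_rpow hv (exp_pos _).le, ← exp_mul, ← exp_mul,
    mul_mul_mul_comm, ← rpow_add' hv (by rw [hab]; norm_num), hab, rpow_one, ← exp_add]
  ring_nf

theorem rpow_one_add_le_of_le_rpow_mul_rpow {u C I a b : ℝ} (hC : 0 < C) (hCu : C ^ 2 ≤ u)
    (hI : 0 ≤ I) (ha : 0 < a) (hb : 0 < b) (hab : a + b = 1) (h : u ≤ C ^ a * I ^ b) :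
    u ^ (1 + a / (2 * b)) ≤ I := by
  have hu : 0 < u := (pow_pos hC 2).trans_le hCu
  have hCpow : C ^ (a / b) ≤ u ^ (a / (2 * b)) := calc
    C ^ (a / b) = (C ^ 2) ^ (a / (2 * b)) := by
      rw [← rpow_natCast, ← rpow_mul hC.le]; congr 1; push_cast; field_simp
    _ ≤ u ^ (a / (2 * b)) := by gcongr
  have hraise : u ^ (1 / b) ≤ C ^ (a / b) * I := calc
    u ^ (1 / b) ≤ (C ^ a * I ^ b) ^ (1 / b) := by gcongr
    _ = C ^ (a / b) * I := by
      rw [mul_rpow (by positivity) (by positivity), ← rpow_mul hC.le, ← rpow_mul hI,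
        mul_one_div_cancel hb.ne', rpow_one, mul_one_div]
  have hsplit : u ^ (1 / b) = u ^ (1 + a / (2 * b)) * u ^ (a / (2 * b)) := by
    rw [← rpow_add hu]; congr 1; field_simp; linarith
  have hmul : u ^ (1 + a / (2 * b)) * u ^ (a / (2 * b)) ≤ I * u ^ (a / (2 * b)) := by
    rw [← hsplit, mul_comm I]
    exact hraise.trans (by gcongr)
  exact le_of_mul_le_mul_right hmul (by positivity)

theorem statement16_general (χ : ℝ → ℝ)
    (hnonneg : ∀ t : ℝ, 1 ≤ t → 0 ≤ χ t)
    (hint : ∀ ξ : ℝ, MeasureTheory.IntegrableOn (fun v => χ v * Real.exp (ξ * v))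
      (Set.Ioi 1))
    (C : ℝ) (hC : C = ∫ v in Set.Ioi (1 : ℝ), χ v) (hCpos : 0 < C)
    (u ξu : ℝ) (hu : C ^ 2 ≤ u) (hξpos : 0 < ξu)
    (hξ : u = ∫ v in Set.Ioi (1 : ℝ), χ v * Real.exp (ξu * v)) :
    ∀ ε : ℝ, 0 < ε →
      u ^ (1 + ε / (2 * ξu)) ≤ ∫ v in Set.Ioi (1 : ℝ), χ v * Real.exp ((ξu + ε) * v) := by
  intro ε hε
  have hχ : 0 ≤ᵐ[volume.restrict (Set.Ioi 1)] χ :=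
    (ae_restrict_iff' measurableSet_Ioi).mpr (.of_forall fun v hv => hnonneg v hv.le)
  have hsum : ξu + ε ≠ 0 := by positivity
  have hab : ε / (ξu + ε) + ξu / (ξu + ε) = 1 := by field_simp; ring
  have hconv := integral_mul_exp_le_rpow_mul_rpow hχ (hint 0) (hint (ξu + ε))
    (a := ε / (ξu + ε)) (b := ξu / (ξu + ε)) (by positivity) (by positivity) hab
  simp only [mul_zero, zero_add, zero_mul, exp_zero, mul_one, ← hC] at hconv
  rw [div_mul_cancel₀ _ hsum, ← hξ] at hconv
  have hI : 0 ≤ ∫ v in Set.Ioi (1 : ℝ), χ v * exp ((ξu + ε) * v) :=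
    setIntegral_nonneg measurableSet_Ioi fun v hv => mul_nonneg (hnonneg v hv.le) (exp_pos _).le
  have hweights : ε / (ξu + ε) / (2 * (ξu / (ξu + ε))) = ε / (2 * ξu) := by field_simp
  rw [← hweights]
  exact rpow_one_add_le_of_le_rpow_mul_rpow hCpos hu hI (by positivity) (by positivity) hab hconv

theorem statement16 (χ : ℝ → ℝ) (hmeas : Measurable χ)
    (hnonneg : ∀ t : ℝ, 1 ≤ t → 0 ≤ χ t)
    (hint : ∀ ξ : ℝ, MeasureTheory.IntegrableOn (fun v => χ v * Real.exp (ξ * v))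
      (Set.Ioi 1))
    (C : ℝ) (hC : C = ∫ v in Set.Ioi (1 : ℝ), χ v) (hCpos : 0 < C)
    (u ξu : ℝ) (hu : C ^ 2 ≤ u) (hξpos : 0 < ξu)
    (hξ : u = ∫ v in Set.Ioi (1 : ℝ), χ v * Real.exp (ξu * v)) :
    ∀ ε : ℝ, 0 < ε →
      u ^ (1 + ε / (2 * ξu)) ≤ ∫ v in Set.Ioi (1 : ℝ), χ v * Real.exp ((ξu + ε) * v) :=
  statement16_general χ hnonneg hint C hC hCpos u ξu hu hξpos hξ
end

section
/- Let χ : [1,∞) → [0,1] be a measurable function and suppose that for every sufficiently large u there is ξ(u) > 0 with u = ∫₁^∞ χ(v)·e^{ξ(u)·v} dv. If ξ(u)/log(u) → 0 as u → ∞, then (1/u)·∫₁^∞ (χ(v)·e^{ξ(u)·v}/v) dv → 0 as u → ∞. -/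
/-!
Split the integral at `T = 1 / δ`. On `(1, T]` the integrand is at most `exp (ξ u * T)`, so that
part contributes at most `T * exp (ξ u * T)`; beyond `T` the factor `1 / v` is at most `δ`, so the
rest contributes at most `δ * u`. Once `ξ u ≤ δ ^ 2 * log u` we have `exp (ξ u * T) ≤ u ^ δ`, and
`u ^ δ / δ ≤ δ * u` for large `u`, so the ratio is eventually at most `2 * δ`.
-/

open MeasureTheory Set Filter Real

theorem setIntegral_Ioi_one_div_le {f : ℝ → ℝ} (hf : IntegrableOn f (Ioi 1))
    (hf0 : ∀ v ∈ Ioi (1 : ℝ), 0 ≤ f v) {T M : ℝ} (hT : 1 ≤ T)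
    (hM : ∀ v ∈ Ioc 1 T, f v ≤ M) :
    ∫ v in Ioi 1, f v / v ≤ (T - 1) * M + (∫ v in Ioi 1, f v) / T := by
  have hg : IntegrableOn (fun v => f v / v) (Ioi 1) := by
    refine hf.mono' (hf.aemeasurable.div aemeasurable_id).aestronglyMeasurable ?_
    refine (ae_restrict_iff' measurableSet_Ioi).2 (Eventually.of_forall fun v hv => ?_)
    rw [norm_div, Real.norm_of_nonneg (hf0 v hv), Real.norm_of_nonneg (by linarith [mem_Ioi.1 hv])]
    exact div_le_self (hf0 v hv) (le_of_lt hv)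
  have hlow : ∫ v in Ioc 1 T, f v / v ≤ (T - 1) * M := by
    calc ∫ v in Ioc 1 T, f v / v ≤ ∫ _ in Ioc 1 T, M := by
          refine setIntegral_mono_on (hg.mono_set Ioc_subset_Ioi_self) (integrableOn_const
            (by simp)) measurableSet_Ioc fun v hv => ?_
          exact (div_le_self (hf0 v hv.1) hv.1.le).trans (hM v hv)
      _ = (T - 1) * M := by simp [measureReal_def, hT]
  have hhigh : ∫ v in Ioi T, f v / v ≤ (∫ v in Ioi 1, f v) / T := by
    calc ∫ v in Ioi T, f v / v ≤ ∫ v in Ioi T, f v / T := by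
          refine setIntegral_mono_on (hg.mono_set (Ioi_subset_Ioi hT))
            ((hf.mono_set (Ioi_subset_Ioi hT)).div_const T) measurableSet_Ioi fun v hv => ?_
          exact div_le_div_of_nonneg_left (hf0 v (lt_of_le_of_lt hT hv)) (by linarith) hv.le
      _ ≤ (∫ v in Ioi 1, f v) / T := by
          rw [integral_div]
          gcongr ?_ / _
          exact setIntegral_mono_set hf ((ae_restrict_iff' measurableSet_Ioi).2
            (Eventually.of_forall hf0)) (Ioi_subset_Ioi hT).eventuallyLE
  have hsplit : ∫ v in Ioi 1, f v / v = (∫ v in Ioc 1 T, f v / v) + ∫ v in Ioi T, f v / v := by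
    rw [← setIntegral_union Ioc_disjoint_Ioi_same measurableSet_Ioi
      (hg.mono_set Ioc_subset_Ioi_self) (hg.mono_set (Ioi_subset_Ioi hT)),
      Ioc_union_Ioi_eq_Ioi hT]
  linarith

theorem setIntegral_mul_exp_div_le {χ : ℝ → ℝ} (hχ : ∀ t : ℝ, 1 ≤ t → 0 ≤ χ t ∧ χ t ≤ 1)
    {s δ : ℝ} (hs : 0 ≤ s) (hδ0 : 0 < δ) (hδ1 : δ ≤ 1)
    (hint : IntegrableOn (fun v => χ v * exp (s * v)) (Ioi 1)) :
    ∫ v in Ioi 1, χ v * exp (s * v) / v ≤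
      exp (s / δ) / δ + δ * ∫ v in Ioi 1, χ v * exp (s * v) := by
  have hT : 1 ≤ 1 / δ := by rw [le_div_iff₀ hδ0]; linarith
  have hbound : ∀ v ∈ Ioc 1 (1 / δ), χ v * exp (s * v) ≤ exp (s / δ) := fun v hv => by
    calc χ v * exp (s * v) ≤ 1 * exp (s * (1 / δ)) := by
          gcongr
          exacts [(hχ v hv.1.le).2, hv.2]
      _ = exp (s / δ) := by rw [one_mul, mul_one_div]
  calc ∫ v in Ioi 1, χ v * exp (s * v) / v
      ≤ (1 / δ - 1) * exp (s / δ) + (∫ v in Ioi 1, χ v * exp (s * v)) / (1 / δ) :=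
        setIntegral_Ioi_one_div_le hint
          (fun v hv => mul_nonneg (hχ v (le_of_lt hv)).1 (exp_pos _).le) hT hbound
    _ ≤ exp (s / δ) / δ + δ * ∫ v in Ioi 1, χ v * exp (s * v) := by
        rw [div_div_eq_mul_div, div_one, sub_one_mul, one_div_mul_eq_div, mul_comm]
        linarith [exp_pos (s / δ)]

theorem eventually_rpow_div_le_mul {δ : ℝ} (hδ0 : 0 < δ) (hδ1 : δ < 1) :
    ∀ᶠ u : ℝ in atTop, u ^ δ / δ ≤ δ * u := by
  filter_upwards [(tendsto_rpow_atTop (sub_pos.2 hδ1)).eventually_ge_atTop (1 / δ ^ 2),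
    eventually_gt_atTop 0] with u hu hu0
  have hsplit : u = u ^ δ * u ^ (1 - δ) := by rw [← rpow_add hu0]; norm_num
  rw [div_le_iff₀ hδ0]
  calc u ^ δ = u ^ δ * (1 / δ ^ 2) * δ ^ 2 := by field_simp
    _ ≤ u ^ δ * u ^ (1 - δ) * δ ^ 2 := by gcongr
    _ = δ * u * δ := by rw [← hsplit]; ring

theorem eventually_setIntegral_mul_exp_div_div_le {χ ξ : ℝ → ℝ}
    (hχ : ∀ t : ℝ, 1 ≤ t → 0 ≤ χ t ∧ χ t ≤ 1)
    (hξ : ∀ᶠ u in atTop, 0 < ξ u ∧ u = ∫ v in Ioi (1 : ℝ), χ v * exp (ξ u * v))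
    (hξo : Tendsto (fun u : ℝ => ξ u / log u) atTop (nhds 0)) {δ : ℝ} (hδ0 : 0 < δ)
    (hδ1 : δ < 1) :
    ∀ᶠ u in atTop, (∫ v in Ioi (1 : ℝ), χ v * exp (ξ u * v) / v) / u ≤ 2 * δ := by
  filter_upwards [hξ, hξo.eventually (gt_mem_nhds (pow_pos hδ0 2)), eventually_gt_atTop 1,
    eventually_rpow_div_le_mul hδ0 hδ1] with u ⟨hξ0, hu⟩ hξlog hu1 hrpow
  have hint : IntegrableOn (fun v => χ v * exp (ξ u * v)) (Ioi 1) :=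
    Integrable.of_integral_ne_zero (by rw [← hu]; linarith)
  have hexp : exp (ξ u / δ) ≤ u ^ δ := by
    rw [rpow_def_of_pos (by linarith), exp_le_exp, div_le_iff₀ hδ0]
    rw [div_lt_iff₀ (log_pos hu1)] at hξlog
    linarith
  rw [div_le_iff₀ (by linarith)]
  calc ∫ v in Ioi 1, χ v * exp (ξ u * v) / v
      ≤ exp (ξ u / δ) / δ + δ * ∫ v in Ioi 1, χ v * exp (ξ u * v) :=
        setIntegral_mul_exp_div_le hχ hξ0.le hδ0 hδ1.le hint
    _ ≤ u ^ δ / δ + δ * u := by rw [← hu]; gcongr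
    _ ≤ 2 * δ * u := by linarith

theorem statement17_general (χ : ℝ → ℝ)
    (hχ : ∀ t : ℝ, 1 ≤ t → 0 ≤ χ t ∧ χ t ≤ 1)
    (ξ : ℝ → ℝ)
    (hξ : ∀ᶠ u in Filter.atTop,
      0 < ξ u ∧ u = ∫ v in Set.Ioi (1 : ℝ), χ v * Real.exp (ξ u * v))
    (hξo : Filter.Tendsto (fun u : ℝ => ξ u / Real.log u) Filter.atTop (nhds 0)) :
    Filter.Tendsto
      (fun u : ℝ => (∫ v in Set.Ioi (1 : ℝ), χ v * Real.exp (ξ u * v) / v) / u)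
      Filter.atTop (nhds 0) := by
  refine tendsto_order.2 ⟨fun a ha => ?_, fun b hb => ?_⟩
  · filter_upwards [eventually_gt_atTop 0] with u hu0
    refine ha.trans_le (div_nonneg (setIntegral_nonneg measurableSet_Ioi fun v hv => ?_) hu0.le)
    exact div_nonneg (mul_nonneg (hχ v (le_of_lt hv)).1 (exp_pos _).le) (zero_le_one.trans hv.le)
  · have hδ0 : 0 < min (b / 3) (1 / 2) := lt_min (by linarith) (by norm_num)
    have hδ1 : min (b / 3) (1 / 2) < 1 := (min_le_right _ _).trans_lt (by norm_num)
    filter_upwards [eventually_setIntegral_mul_exp_div_div_le hχ hξ hξo hδ0 hδ1] with u hu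
    linarith [min_le_left (b / 3) (1 / 2)]

theorem statement17 (χ : ℝ → ℝ) (hmeas : Measurable χ)
    (hχ : ∀ t : ℝ, 1 ≤ t → 0 ≤ χ t ∧ χ t ≤ 1)
    (ξ : ℝ → ℝ)
    (hξ : ∀ᶠ u in Filter.atTop,
      0 < ξ u ∧ u = ∫ v in Set.Ioi (1 : ℝ), χ v * Real.exp (ξ u * v))
    (hξo : Filter.Tendsto (fun u : ℝ => ξ u / Real.log u) Filter.atTop (nhds 0)) :
    Filter.Tendsto
      (fun u : ℝ => (∫ v in Set.Ioi (1 : ℝ), χ v * Real.exp (ξ u * v) / v) / u)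
      Filter.atTop (nhds 0) :=
  statement17_general χ hχ ξ hξ hξo
end

section
/- Let h : (0,∞) → (0,∞) be nondecreasing, continuously differentiable with h'(t) > 0 for all t, h(t) → ∞ as t → ∞, and t·h'(t)/h(t) → 0 as t → ∞. Define g(t) = h(t)/(t·h'(t)) and, for u > e, v(u) = min(log(u), min_{log(u) ≤ t ≤ (log u)²} g(t)). Then v(u) → ∞ as u → ∞, and h(v(u)·log(u))/h(log(u)) → 1 as u → ∞. -/
/-!
Write `g t = h t / (t * h' t)`; the hypothesis `t h'(t) / h(t) → 0` says `g → ∞`, hence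
`v(u) → ∞`. With `a = log u` and `v = v(u) ≤ a`, the bound `v ≤ g` on `[a, v a] ⊆ [a, a²]`
says `(log h)' ≤ 1 / (v t)` there, and integrating from `a` to `v a` gives
`h (v a) / h a ≤ v ^ (1 / v)`. This tends to `1`, while monotonicity gives `h (v a) / h a ≥ 1`.
-/

open Filter Set Real

theorem tendsto_div_mul_deriv_atTop {h h' : ℝ → ℝ} (hpos : ∀ t, 0 < t → 0 < h t)
    (h'pos : ∀ t, 0 < t → 0 < h' t)
    (hsmall : Tendsto (fun t => t * h' t / h t) atTop (nhds 0)) :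
    Tendsto (fun t => h t / (t * h' t)) atTop atTop := by
  have hsmall' : Tendsto (fun t => t * h' t / h t) atTop (nhdsWithin 0 (Ioi 0)) := by
    refine tendsto_nhdsWithin_of_tendsto_nhds_of_eventually_within _ hsmall ?_
    filter_upwards [eventually_gt_atTop 0] with t ht
    exact div_pos (mul_pos ht (h'pos t ht)) (hpos t ht)
  refine hsmall'.inv_tendsto_nhdsGT_zero.congr fun t => ?_
  simp only [Pi.inv_apply, inv_div]

theorem tendsto_sInf_image_Icc_atTop {α : Type*} {l : Filter α} {g : ℝ → ℝ} {a b : α → ℝ}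
    (hg : Tendsto g atTop atTop) (ha : Tendsto a l atTop) (hab : ∀ᶠ x in l, a x ≤ b x) :
    Tendsto (fun x => sInf (g '' Icc (a x) (b x))) l atTop := by
  refine tendsto_atTop.2 fun c => ?_
  obtain ⟨T, hT⟩ := eventually_atTop.mp (hg.eventually_ge_atTop c)
  filter_upwards [ha.eventually_ge_atTop T, hab] with x hTa hx
  refine le_csInf ((nonempty_Icc.2 hx).image g) ?_
  rintro _ ⟨t, ht, rfl⟩
  exact hT t (hTa.trans ht.1)

theorem le_rpow_mul_of_mul_deriv_le {h h' : ℝ → ℝ} {a b c : ℝ} (ha : 0 < a) (hab : a ≤ b)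
    (hpos : ∀ t ∈ Icc a b, 0 < h t) (hderiv : ∀ t ∈ Icc a b, HasDerivAt h (h' t) t)
    (hbound : ∀ t ∈ Icc a b, t * h' t ≤ c * h t) :
    h b ≤ (b / a) ^ c * h a := by
  have hb : 0 < b := ha.trans_le hab
  have hF : ∀ t ∈ Icc a b,
      HasDerivAt (fun t => log (h t) - c * log t) (h' t / h t - c * t⁻¹) t := fun t ht =>
    ((hderiv t ht).log (hpos t ht).ne').sub
      ((hasDerivAt_log (ha.trans_le ht.1).ne').const_mul c)
  have hanti : AntitoneOn (fun t => log (h t) - c * log t) (Icc a b) := by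
    refine antitoneOn_of_hasDerivWithinAt_nonpos (convex_Icc a b)
      (fun t ht => (hF t ht).continuousAt.continuousWithinAt)
      (fun t ht => (hF t (interior_subset ht)).hasDerivWithinAt) fun t ht => ?_
    replace ht := interior_subset ht
    have htpos : 0 < t := ha.trans_le ht.1
    rw [sub_nonpos]
    calc h' t / h t = t * h' t / h t * t⁻¹ := by field_simp
      _ ≤ c * t⁻¹ := by
        gcongr
        exact (div_le_iff₀ (hpos t ht)).2 (hbound t ht)
  have hFba := hanti ⟨le_rfl, hab⟩ ⟨hab, le_rfl⟩ hab
  calc h b = exp (log (h b)) := (exp_log (hpos b ⟨hab, le_rfl⟩)).symm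
    _ ≤ exp (log (b / a) * c + log (h a)) := by
      rw [log_div hb.ne' ha.ne']
      gcongr
      linarith
    _ = (b / a) ^ c * h a := by
      rw [exp_add, rpow_def_of_pos (div_pos hb ha), exp_log (hpos a ⟨le_rfl, hab⟩)]

theorem le_rpow_one_div_mul_of_le_div_mul_deriv {h h' : ℝ → ℝ} {a v : ℝ} (ha : 0 < a)
    (hv : 1 ≤ v) (hpos : ∀ t, 0 < t → 0 < h t) (hderiv : ∀ t, 0 < t → HasDerivAt h (h' t) t)
    (h'pos : ∀ t, 0 < t → 0 < h' t) (hg : ∀ t ∈ Icc a (v * a), v ≤ h t / (t * h' t)) :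
    h (v * a) ≤ v ^ (1 / v) * h a := by
  have hva : a ≤ v * a := le_mul_of_one_le_left ha.le hv
  have key := le_rpow_mul_of_mul_deriv_le (c := 1 / v) ha hva (fun t ht => hpos t (ha.trans_le ht.1))
    (fun t ht => hderiv t (ha.trans_le ht.1)) fun t ht => ?_
  · rwa [mul_div_cancel_right₀ _ ha.ne'] at key
  have htpos : 0 < t := ha.trans_le ht.1
  have hgt := (le_div_iff₀ (mul_pos htpos (h'pos t htpos))).1 (hg t ht)
  rw [one_div_mul_eq_div, le_div_iff₀ (by linarith)]
  linarith

theorem statement19_general (h h' : ℝ → ℝ)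
    (hpos : ∀ t : ℝ, 0 < t → 0 < h t)
    (hmono : MonotoneOn h (Set.Ioi 0))
    (hderiv : ∀ t : ℝ, 0 < t → HasDerivAt h (h' t) t)
    (h'pos : ∀ t : ℝ, 0 < t → 0 < h' t)
    (hsmall : Filter.Tendsto (fun t : ℝ => t * h' t / h t) Filter.atTop (nhds 0)) :
    Filter.Tendsto
      (fun u : ℝ => min (Real.log u)
        (sInf ((fun t : ℝ => h t / (t * h' t)) ''
          Set.Icc (Real.log u) ((Real.log u) ^ 2))))
      Filter.atTop Filter.atTop ∧
    Filter.Tendsto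
      (fun u : ℝ =>
        h ((min (Real.log u)
            (sInf ((fun t : ℝ => h t / (t * h' t)) ''
              Set.Icc (Real.log u) ((Real.log u) ^ 2)))) * Real.log u) /
          h (Real.log u))
      Filter.atTop (nhds 1) := by
  set g : ℝ → ℝ := fun t => h t / (t * h' t)
  set v : ℝ → ℝ := fun u => min (log u) (sInf (g '' Icc (log u) (log u ^ 2)))
  have hv : Tendsto v atTop atTop := by
    refine tendsto_inf_atTop _ tendsto_log_atTop (tendsto_sInf_image_Icc_atTop
      (tendsto_div_mul_deriv_atTop hpos h'pos hsmall) tendsto_log_atTop ?_)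
    filter_upwards [tendsto_log_atTop.eventually_ge_atTop 1] with u hu
    nlinarith
  refine ⟨hv, ?_⟩
  have hbounds : ∀ᶠ u in atTop, 1 ≤ h (v u * log u) / h (log u) ∧
      h (v u * log u) / h (log u) ≤ v u ^ (1 / v u) := by
    filter_upwards [hv.eventually_ge_atTop 1, tendsto_log_atTop.eventually_gt_atTop 0]
      with u hv1 ha
    have hva : v u * log u ≤ log u ^ 2 := by
      rw [sq]
      exact mul_le_mul_of_nonneg_right (min_le_left _ _) ha.le
    have hg_bdd : BddBelow (g '' Icc (log u) (log u ^ 2)) := by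
      refine ⟨0, ?_⟩
      rintro _ ⟨t, ht, rfl⟩
      have htpos : 0 < t := ha.trans_le ht.1
      exact (div_pos (hpos t htpos) (mul_pos htpos (h'pos t htpos))).le
    have hvg : ∀ t ∈ Icc (log u) (v u * log u), v u ≤ g t := fun t ht =>
      (min_le_right _ _).trans (csInf_le hg_bdd (mem_image_of_mem g ⟨ht.1, ht.2.trans hva⟩))
    rw [le_div_iff₀ (hpos _ ha), one_mul, div_le_iff₀ (hpos _ ha)]
    exact ⟨hmono ha (mul_pos (one_pos.trans_le hv1) ha) (le_mul_of_one_le_left ha.le hv1),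
      le_rpow_one_div_mul_of_le_div_mul_deriv ha hv1 hpos hderiv h'pos hvg⟩
  exact tendsto_of_tendsto_of_tendsto_of_le_of_le' tendsto_const_nhds (tendsto_rpow_div.comp hv)
    (hbounds.mono fun _ => And.left) (hbounds.mono fun _ => And.right)

theorem statement19 (h h' : ℝ → ℝ)
    (hpos : ∀ t : ℝ, 0 < t → 0 < h t)
    (hmono : MonotoneOn h (Set.Ioi 0))
    (hderiv : ∀ t : ℝ, 0 < t → HasDerivAt h (h' t) t)
    (h'cont : ContinuousOn h' (Set.Ioi 0))
    (h'pos : ∀ t : ℝ, 0 < t → 0 < h' t)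
    (htop : Filter.Tendsto h Filter.atTop Filter.atTop)
    (hsmall : Filter.Tendsto (fun t : ℝ => t * h' t / h t) Filter.atTop (nhds 0)) :
    Filter.Tendsto
      (fun u : ℝ => min (Real.log u)
        (sInf ((fun t : ℝ => h t / (t * h' t)) ''
          Set.Icc (Real.log u) ((Real.log u) ^ 2))))
      Filter.atTop Filter.atTop ∧
    Filter.Tendsto
      (fun u : ℝ =>
        h ((min (Real.log u)
            (sInf ((fun t : ℝ => h t / (t * h' t)) ''
              Set.Icc (Real.log u) ((Real.log u) ^ 2)))) * Real.log u) /
          h (Real.log u))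
      Filter.atTop (nhds 1) :=
  statement19_general h h' hpos hmono hderiv h'pos hsmall
end
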